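/- arXiv:math/0310197 — 4 statements merged into one kernel-verified Lean document; each statement's English description precedes it below -/
import Mathlib

section
/- Let k ≥ 1 and let a_1 < a_2 < … < a_k be positive integers, A = {a_1,…,a_k}. In ℤ[[x,y]], ∑_{n≥0} ∑_{σ∈C_n^A} levels(σ)·x^n·y^{parts(σ)} = ( ∑_{j=1}^k x^{2a_j} ) · ∑_{m≥0} (m+1)·( ∑_{j=1}^k x^{a_j} )^m · y^{m+2}. -/
open scoped Classical

/-- Number of levels of a list (adjacent equal pairs). -/
def levelsL (l : List ℕ) : ℕ := (l.zip l.tail).countP (fun p => decide (p.1 = p.2))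


/-- `∑_{n≥0} ∑_{σ∈C_n^A} levels(σ) x^n y^{parts(σ)}` as an element of
`ℤ[[x]][[y]]` (the outer variable is `y`, the inner one is `x`). -/
noncomputable def levelsGF {k : ℕ} (a : Fin k → ℕ) : PowerSeries (PowerSeries ℤ) :=
  PowerSeries.mk fun p => PowerSeries.mk fun n =>
    ((∑ c ∈ Finset.univ.filter (fun c : Composition n =>
        (∀ b ∈ c.blocks, ∃ i, a i = b) ∧ c.length = p), levelsL c.blocks : ℕ) : ℤ)

/-- `(∑_j x^{2a_j}) · ∑_{m≥0} (m+1) (∑_j x^{a_j})^m y^{m+2}` as an element of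
`ℤ[[x]][[y]]`: the coefficient of `y^t` for `t = m+2 ≥ 2` is
`(m+1) (∑_j x^{a_j})^m (∑_j x^{2a_j})`. -/
noncomputable def rhsGF {k : ℕ} (a : Fin k → ℕ) : PowerSeries (PowerSeries ℤ) :=
  (PowerSeries.C : PowerSeries ℤ →+* PowerSeries (PowerSeries ℤ))
      (∑ j : Fin k, (PowerSeries.X : PowerSeries ℤ) ^ (2 * a j))
    * PowerSeries.mk (fun t => if 2 ≤ t then
        ((t - 1 : ℕ) : PowerSeries ℤ)
          * (∑ j : Fin k, (PowerSeries.X : PowerSeries ℤ) ^ (a j)) ^ (t - 2) else 0)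

namespace Stmt7

variable {k : ℕ} (a : Fin k → ℕ)

noncomputable def T : PowerSeries ℤ := ∑ j : Fin k, (PowerSeries.X : PowerSeries ℤ) ^ (a j)
noncomputable def D : PowerSeries ℤ := ∑ j : Fin k, (PowerSeries.X : PowerSeries ℤ) ^ (2 * a j)

def S {p : ℕ} (f : Fin p → Fin k) : ℕ := ∑ t, a (f t)

noncomputable def L (p : ℕ) : PowerSeries ℤ :=
  ∑ f : Fin p → Fin k,
    ((levelsL (List.ofFn fun t => a (f t)) : ℕ) : ℤ) * (PowerSeries.X : PowerSeries ℤ) ^ (S a f)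

lemma levelsL_cons_cons (x y : ℕ) (l : List ℕ) :
    levelsL (x :: y :: l) = (if x = y then 1 else 0) + levelsL (y :: l) := by
  simp [levelsL, List.countP_cons]
  by_cases h : x = y <;> simp [h] <;> omega

lemma levelsL_single (x : ℕ) : levelsL [x] = 0 := rfl

lemma S_cons {p : ℕ} (j : Fin k) (g : Fin p → Fin k) :
    S a (Fin.cons j g) = a j + S a g := by
  simp [S, Fin.sum_univ_succ]

lemma sum_cons_pi {M : Type*} [AddCommMonoid M] {p : ℕ} (F : (Fin (p+1) → Fin k) → M) :
    (∑ f : Fin (p+1) → Fin k, F f) = ∑ j : Fin k, ∑ g : Fin p → Fin k, F (Fin.cons j g) := by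
  rw [← (Fintype.sum_equiv (Fin.consEquiv fun _ => Fin k) (fun x => F (Fin.cons x.1 x.2)) F (fun x => rfl))]
  rw [Fintype.sum_prod_type]

lemma M_eq : ∀ p, (∑ f : Fin p → Fin k, (PowerSeries.X : PowerSeries ℤ) ^ S a f) = T a ^ p := by
  intro p
  induction p with
  | zero => simp [S, T]
  | succ p ih =>
      rw [sum_cons_pi]
      simp only [S_cons, pow_add, pow_succ]
      rw [← Finset.sum_mul_sum]
      rw [ih]
      rw [mul_comm]
      rfl


lemma L_one : L a 1 = 0 := by
  have : ∀ f : Fin 1 → Fin k, levelsL (List.ofFn fun t => a (f t)) = 0 := by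
    intro f
    simp [List.ofFn_succ, levelsL_single]
  simp only [L]
  rw [Finset.sum_eq_zero]
  intro f _
  rw [this f]
  simp

lemma L_rec (hinj : Function.Injective a) (p : ℕ) : L a (p+2) = T a * L a (p+1) + D a * T a ^ p := by
  rw [L, sum_cons_pi]
  have key : ∀ (j : Fin k) (g : Fin (p+1) → Fin k),
      ((((levelsL (List.ofFn fun t : Fin (p+2) => a ((Fin.cons j g : Fin (p+2) → Fin k) t)) : ℕ) : ℤ)) : PowerSeries ℤ)
        = (if j = g 0 then 1 else 0)
          + (((levelsL (List.ofFn fun t => a (g t)) : ℕ) : ℤ) : PowerSeries ℤ) := by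
    intro j g
    have h2 : (List.ofFn fun t : Fin (p+1) => a (g t))
        = a (g 0) :: List.ofFn (fun t : Fin p => a (g t.succ)) := by
      simp [List.ofFn_succ]
    have h1 : (List.ofFn fun t : Fin (p+2) => a ((Fin.cons j g : Fin (p+2) → Fin k) t))
        = a j :: a (g 0) :: List.ofFn (fun t : Fin p => a (g t.succ)) := by
      rw [List.ofFn_succ]
      simp only [Fin.cons_zero, Fin.cons_succ]
      rw [h2]
    rw [h1, h2, levelsL_cons_cons]
    push_cast
    congr 1
    by_cases h : j = g 0
    · simp [h]
    · have : a j ≠ a (g 0) := fun hh => h (hinj hh)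
      simp [h, this]
  simp only [key, S_cons, pow_add, add_mul, Finset.sum_add_distrib]
  rw [add_comm (T a * L a (p+1))]
  congr 1
  · -- indicator part = D * T^p
    rw [Finset.sum_comm]
    have : ∀ g : Fin (p+1) → Fin k,
        (∑ j : Fin k, (if j = g 0 then (1:PowerSeries ℤ) else 0) * ((PowerSeries.X:PowerSeries ℤ) ^ a j * PowerSeries.X ^ S a g))
          = (PowerSeries.X:PowerSeries ℤ) ^ a (g 0) * PowerSeries.X ^ S a g := by
      intro g
      rw [Finset.sum_eq_single (g 0)]
      · simp
      · intro b _ hb; simp [hb]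
      · simp
    simp only [this]
    rw [sum_cons_pi (F := fun g => (PowerSeries.X:PowerSeries ℤ) ^ a (g 0) * PowerSeries.X ^ S a g)]
    simp only [Fin.cons_zero, S_cons, pow_add]
    rw [D, ← M_eq a p, Finset.sum_mul_sum]
    apply Finset.sum_congr rfl; intro j _
    apply Finset.sum_congr rfl; intro h _
    rw [two_mul, pow_add]
    ring
  · -- second part = T * L (p+1)
    rw [T, L, Finset.sum_mul_sum]
    apply Finset.sum_congr rfl; intro j _
    apply Finset.sum_congr rfl; intro g _
    ring

lemma L_closed (hinj : Function.Injective a) (q : ℕ) :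
    L a (q+2) = D a * (((q+1 : ℕ) : PowerSeries ℤ) * T a ^ q) := by
  induction q with
  | zero => rw [L_rec a hinj 0, L_one]; push_cast; ring
  | succ q ih =>
      rw [L_rec a hinj (q+1), ih]
      push_cast
      ring

lemma blocks_length {n : ℕ} (c : Composition n) : c.blocks.length = c.length := rfl

noncomputable def toFun {n p : ℕ} (c : Composition n)
    (h : ∀ b ∈ c.blocks, ∃ i, a i = b) (hl : c.length = p) : Fin p → Fin k :=
  fun t => Classical.choose
    (h (c.blocks[t.val]'(by rw [blocks_length, hl]; exact t.isLt)) (List.getElem_mem _))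

lemma toFun_spec {n p : ℕ} (c : Composition n)
    (h : ∀ b ∈ c.blocks, ∃ i, a i = b) (hl : c.length = p) (t : Fin p) :
    a (toFun a c h hl t) = c.blocks[t.val]'(by rw [blocks_length, hl]; exact t.isLt) :=
  Classical.choose_spec
    (h (c.blocks[t.val]'(by rw [blocks_length, hl]; exact t.isLt)) (List.getElem_mem _))

lemma ofFn_toFun {n p : ℕ} (c : Composition n)
    (h : ∀ b ∈ c.blocks, ∃ i, a i = b) (hl : c.length = p) :
    (List.ofFn fun t => a (toFun a c h hl t)) = c.blocks := by
  apply List.ext_getElem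
  · simp [blocks_length, hl]
  · intro i h1 h2
    simp only [List.getElem_ofFn]
    exact toFun_spec a c h hl ⟨i, by simpa using h1⟩

def toComp {n p : ℕ} (f : Fin p → Fin k) (hpos : ∀ i, 0 < a i) (hn : n = S a f) :
    Composition n :=
  ⟨List.ofFn fun t => a (f t),
   by intro i hi
      rw [List.mem_ofFn] at hi
      obtain ⟨t, rfl⟩ := hi
      exact hpos _,
   by rw [List.sum_ofFn]; exact hn.symm⟩

lemma coeff_levelsGF (hpos : ∀ i, 0 < a i) (hinj : Function.Injective a) (p : ℕ) :
    (PowerSeries.mk fun n => ((∑ c ∈ Finset.univ.filter (fun c : Composition n =>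
        (∀ b ∈ c.blocks, ∃ i, a i = b) ∧ c.length = p), levelsL c.blocks : ℕ) : ℤ))
      = L a p := by
  ext n
  rw [PowerSeries.coeff_mk, L, map_sum]
  have hc : ∀ f : Fin p → Fin k,
      (PowerSeries.coeff n)
        ((((levelsL (List.ofFn fun t => a (f t)) : ℕ) : ℤ) : PowerSeries ℤ)
          * PowerSeries.X ^ S a f)
      = if n = S a f then ((levelsL (List.ofFn fun t => a (f t)) : ℕ) : ℤ) else 0 := by
    intro f
    rw [show (((levelsL (List.ofFn fun t => a (f t)) : ℕ) : ℤ) : PowerSeries ℤ)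
        = PowerSeries.C _ from (map_intCast _ _).symm,
      PowerSeries.coeff_C_mul, PowerSeries.coeff_X_pow]
    split <;> simp
  simp only [hc]
  rw [← Finset.sum_filter]
  push_cast
  refine Finset.sum_bij'
    (fun c hc => toFun a c (Finset.mem_filter.mp hc).2.1 (Finset.mem_filter.mp hc).2.2)
    (fun f hf => toComp a f hpos (Finset.mem_filter.mp hf).2)
    ?_ ?_ ?_ ?_ ?_
  · intro c hc
    simp only [Finset.mem_filter, Finset.mem_univ, true_and]
    have h1 := congrArg List.sum
      (ofFn_toFun a c (Finset.mem_filter.mp hc).2.1 (Finset.mem_filter.mp hc).2.2)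
    rw [List.sum_ofFn, c.blocks_sum] at h1
    exact h1.symm
  · intro f hf
    simp only [Finset.mem_filter, Finset.mem_univ, true_and]
    constructor
    · intro b hb
      rw [toComp] at hb
      simp only [List.mem_ofFn] at hb
      obtain ⟨t, rfl⟩ := hb
      exact ⟨f t, rfl⟩
    · simp [toComp, Composition.length]
  · intro c hc
    apply Composition.ext
    simp only [toComp]
    exact ofFn_toFun a c (Finset.mem_filter.mp hc).2.1 (Finset.mem_filter.mp hc).2.2
  · intro f hf
    funext t
    apply hinj
    beta_reduce
    rw [toFun_spec a]
    simp [toComp]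
  · intro c hc
    rw [ofFn_toFun a c (Finset.mem_filter.mp hc).2.1 (Finset.mem_filter.mp hc).2.2]

end Stmt7

theorem stmt7 {k : ℕ} (hk : 1 ≤ k) (a : Fin k → ℕ) (hpos : ∀ i, 0 < a i)
    (hmono : StrictMono a) :
    levelsGF a = rhsGF a := by
  have hinj := hmono.injective
  apply PowerSeries.ext
  intro p
  rw [levelsGF, rhsGF, PowerSeries.coeff_mk, PowerSeries.coeff_C_mul, PowerSeries.coeff_mk]
  rw [Stmt7.coeff_levelsGF a hpos hinj p]
  match p with
  | 0 => simp [Stmt7.L, levelsL]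
  | 1 => simp [Stmt7.L_one]
  | (q+2) =>
      rw [Stmt7.L_closed a hinj q]
      rw [if_pos (by omega : 2 ≤ q + 2)]
      norm_num [Stmt7.T, Stmt7.D]
end

section
/- Let k ≥ 1 and let a_1 < a_2 < … < a_k be positive integers, A = {a_1,…,a_k}. In ℤ[[x,y,r,d]] set b_j = x^{a_j}·y, and let E_A(x;y;r,d) = ∑_{n≥0} ∑_{σ∈E_n^A} x^n y^{parts(σ)} r^{rises(σ)} d^{drops(σ)}. Then ( E_A(x;y;r,d) − 1 ) · ( ∏_{i=1}^k (1 + b_i·d) − d·∑_{j=1}^k b_j · ∏_{i=1}^{j−1}(1 + b_i·r) · ∏_{i=j+1}^{k}(1 + b_i·d) ) = ∑_{j=1}^k b_j · ∏_{i=1}^{j−1}(1 + b_i·r) · ∏_{i=j+1}^{k}(1 + b_i·d). (This is the denominator-cleared form of E_A = 1 + [∑_j (b_j/(1+b_j d))∏_{i<j}(1+b_i r)/(1+b_i d)] / [1 − ∑_j (b_j d/(1+b_j d))∏_{i<j}(1+b_i r)/(1+b_i d)].) -/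
open scoped Classical

open MvPowerSeries

/-- Number of rises of a list (adjacent pairs with strict increase). -/
def risesL (l : List ℕ) : ℕ := (l.zip l.tail).countP (fun p => decide (p.1 < p.2))

/-- Number of drops of a list (adjacent pairs with strict decrease). -/
def dropsL (l : List ℕ) : ℕ := (l.zip l.tail).countP (fun p => decide (p.2 < p.1))

/-- The generating function `E_A(x;y;r,d)` in `ℤ[[x,y,r,d]]`, with `x = X 0`,
`y = X 1`, `r = X 2`, `d = X 3`: the coefficient of `x^n y^p r^s d^u` is the
number of Carlitz compositions (no two adjacent parts equal) of `n` with parts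
in `A = {a 1, …, a k}`, with `p` parts, `s` rises and `u` drops. -/
noncomputable def EA {k : ℕ} (a : Fin k → ℕ) : MvPowerSeries (Fin 4) ℤ :=
  fun m => ((Finset.univ.filter (fun c : Composition (m 0) =>
      (∀ p ∈ c.blocks, ∃ i, a i = p) ∧ c.blocks.Chain' (· ≠ ·) ∧ c.length = m 1 ∧
      risesL c.blocks = m 2 ∧ dropsL c.blocks = m 3)).card : ℤ)

/-- `b j = x^{a_j} · y`. -/
noncomputable def bb {k : ℕ} (a : Fin k → ℕ) (j : Fin k) : MvPowerSeries (Fin 4) ℤ :=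
  (X 0) ^ (a j) * X 1

lemma head?_some_eq {v : ℕ} {l : List ℕ} (h : l.head? = some v) : l = v :: l.tail := by
  cases l <;> simp_all

lemma risesL_cons {x y : ℕ} {t : List ℕ} (h : t.head? = some y) :
    risesL (x :: t) = risesL t + (if x < y then 1 else 0) := by
  rw [head?_some_eq h]; simp [risesL, List.countP_cons]

lemma dropsL_cons {x y : ℕ} {t : List ℕ} (h : t.head? = some y) :
    dropsL (x :: t) = dropsL t + (if y < x then 1 else 0) := by
  rw [head?_some_eq h]; simp [dropsL, List.countP_cons]

def baseP {k : ℕ} (a : Fin k → ℕ) (m : Fin 4 →₀ ℕ) (l : List ℕ) : Prop :=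
  (∀ p ∈ l, ∃ i, a i = p) ∧ l.Chain' (· ≠ ·) ∧ l.length = m 1 ∧
    risesL l = m 2 ∧ dropsL l = m 3

noncomputable def cnt {k : ℕ} (a : Fin k → ℕ) (m : Fin 4 →₀ ℕ) (Q : List ℕ → Prop) : ℕ :=
  (Finset.univ.filter (fun c : Composition (m 0) => baseP a m c.blocks ∧ Q c.blocks)).card

lemma fin4_le {u v : Fin 4 →₀ ℕ} :
    u ≤ v ↔ u 0 ≤ v 0 ∧ u 1 ≤ v 1 ∧ u 2 ≤ v 2 ∧ u 3 ≤ v 3 := by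
  rw [Finsupp.le_def]
  exact ⟨fun h => ⟨h 0, h 1, h 2, h 3⟩, fun ⟨h0, h1, h2, h3⟩ s => by fin_cases s <;> assumption⟩

lemma fin4_ext {u v : Fin 4 →₀ ℕ} (h0 : u 0 = v 0) (h1 : u 1 = v 1) (h2 : u 2 = v 2)
    (h3 : u 3 = v 3) : u = v := by
  ext s; fin_cases s <;> assumption

noncomputable def ee (n : ℕ) : Fin 4 →₀ ℕ := Finsupp.single 0 n + Finsupp.single 1 1

lemma ee_apply (n : ℕ) : ee n 0 = n ∧ ee n 1 = 1 ∧ ee n 2 = 0 ∧ ee n 3 = 0 := by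
  refine ⟨?_, ?_, ?_, ?_⟩ <;> simp [ee, Finsupp.single_apply]

noncomputable def eR (n : ℕ) : Fin 4 →₀ ℕ := ee n + Finsupp.single 2 1
noncomputable def eD (n : ℕ) : Fin 4 →₀ ℕ := ee n + Finsupp.single 3 1

lemma eR_apply (n : ℕ) : eR n 0 = n ∧ eR n 1 = 1 ∧ eR n 2 = 1 ∧ eR n 3 = 0 := by
  refine ⟨?_, ?_, ?_, ?_⟩ <;> simp [eR, ee, Finsupp.single_apply]

lemma eD_apply (n : ℕ) : eD n 0 = n ∧ eD n 1 = 1 ∧ eD n 2 = 0 ∧ eD n 3 = 1 := by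
  refine ⟨?_, ?_, ?_, ?_⟩ <;> simp [eD, ee, Finsupp.single_apply]

lemma sub_apply4 (u v : Fin 4 →₀ ℕ) (s : Fin 4) : (u - v) s = u s - v s := by
  simp [Finsupp.tsub_apply]

lemma card_comp_cons {v n' n : ℕ} (hv : 0 < v) (hn : n = v + n') (Q : List ℕ → Prop) :
    (Finset.univ.filter (fun c : Composition n => c.blocks.head? = some v ∧ Q c.blocks.tail)).card
    = (Finset.univ.filter (fun c : Composition n' => Q c.blocks)).card := by
  refine Finset.card_bij'
    (fun c (hc : c ∈ _) =>
      (⟨c.blocks.tail, fun {i} hi => c.blocks_pos (List.mem_of_mem_tail hi), by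
        have hc' := (Finset.mem_filter.mp hc).2.1
        have := c.blocks_sum
        rw [head?_some_eq hc'] at this
        simp at this; omega⟩ : Composition n'))
    (fun c' (hc' : c' ∈ _) =>
      (⟨v :: c'.blocks, fun {i} hi => by
          rcases List.mem_cons.mp hi with h | h
          · omega
          · exact c'.blocks_pos h, by
        have := c'.blocks_sum
        simp [this, hn]⟩ : Composition n)) ?_ ?_ ?_ ?_
  · intro c hc
    simp only [Finset.mem_filter, Finset.mem_univ, true_and] at hc ⊢
    exact hc.2
  · intro c' hc'
    simp only [Finset.mem_filter, Finset.mem_univ, true_and] at hc' ⊢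
    exact ⟨rfl, hc'⟩
  · intro c hc
    simp only [Finset.mem_filter, Finset.mem_univ, true_and] at hc
    apply Composition.ext
    exact (head?_some_eq hc.1).symm
  · intro c' hc'
    apply Composition.ext
    rfl

section main
variable {k : ℕ} {a : Fin k → ℕ}

/-- the "singleton composition" count. -/
lemma cnt_nil (hpos : ∀ i, 0 < a i) (j : Fin k) (m : Fin 4 →₀ ℕ) :
    cnt a m (fun l => l.head? = some (a j) ∧ l.tail.head? = none)
      = if m = ee (a j) then 1 else 0 := by
  obtain ⟨he0, he1, he2, he3⟩ := ee_apply (a j)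
  have hchar : ∀ c : Composition (m 0),
      (baseP a m c.blocks ∧ c.blocks.head? = some (a j) ∧ c.blocks.tail.head? = none)
      → c.blocks = [a j] ∧ m = ee (a j) := by
    intro c ⟨hbase, hh, ht⟩
    have hb := head?_some_eq hh
    have htl : c.blocks.tail = [] := by
      rwa [List.head?_eq_none_iff] at ht
    rw [htl] at hb
    have hsum := c.blocks_sum
    rw [hb] at hsum
    obtain ⟨_, _, hlen, hr, hd⟩ := hbase
    rw [hb] at hlen hr hd
    refine ⟨hb, fin4_ext ?_ ?_ ?_ ?_⟩
    · rw [he0]; simpa using hsum.symm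
    · rw [he1]; simpa using hlen.symm
    · rw [he2]; simpa [risesL] using hr.symm
    · rw [he3]; simpa [dropsL] using hd.symm
  by_cases hm : m = ee (a j)
  · rw [if_pos hm]
    unfold cnt
    apply Finset.card_eq_one.mpr
    have hm0 : m 0 = a j := by rw [hm, he0]
    refine ⟨⟨[a j], by simpa using hpos j, by simp [hm0]⟩, ?_⟩
    apply Finset.eq_singleton_iff_unique_mem.mpr
    constructor
    · simp only [Finset.mem_filter, Finset.mem_univ, true_and]
      refine ⟨⟨?_, ?_, ?_, ?_, ?_⟩, by simp, by simp⟩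
      · rintro p hp
        simp at hp
        exact ⟨j, hp.symm⟩
      · exact List.isChain_singleton _
      · rw [hm, he1]; simp
      · rw [hm, he2]; simp [risesL]
      · rw [hm, he3]; simp [dropsL]
    · intro c hc
      simp only [Finset.mem_filter, Finset.mem_univ, true_and] at hc
      apply Composition.ext
      exact (hchar c hc).1
  · rw [if_neg hm]
    unfold cnt
    apply Finset.card_eq_zero.mpr
    apply Finset.eq_empty_iff_forall_notMem.mpr
    intro c hc
    simp only [Finset.mem_filter, Finset.mem_univ, true_and] at hc
    exact hm (hchar c hc).2

end main
section rise
open scoped Classical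
variable {k : ℕ} {a : Fin k → ℕ}

lemma cnt_rise (hmono : StrictMono a) (hpos : ∀ i, 0 < a i) {j i : Fin k} (hji : j < i)
    (m : Fin 4 →₀ ℕ) :
    cnt a m (fun l => l.head? = some (a j) ∧ l.tail.head? = some (a i))
      = if eR (a j) ≤ m then
          cnt a (m - eR (a j)) (fun l => l.head? = some (a i)) else 0 := by
  obtain ⟨he0, he1, he2, he3⟩ := eR_apply (a j)
  have haji : a j < a i := hmono hji
  by_cases h : eR (a j) ≤ m
  · obtain ⟨h0, h1, h2, h3⟩ := fin4_le.mp h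
    rw [if_pos h]
    have hm0 : (m - eR (a j)) 0 = m 0 - a j := by rw [sub_apply4, he0]
    have hm1 : (m - eR (a j)) 1 = m 1 - 1 := by rw [sub_apply4, he1]
    have hm2 : (m - eR (a j)) 2 = m 2 - 1 := by rw [sub_apply4, he2]
    have hm3 : (m - eR (a j)) 3 = m 3 := by rw [sub_apply4, he3]; omega
    rw [he0] at h0; rw [he1] at h1; rw [he2] at h2
    unfold cnt
    beta_reduce
    refine (congrArg Finset.card ?_).trans ((card_comp_cons (hpos j)
      (by omega : m 0 = a j + (m - eR (a j)) 0)
      (fun t => baseP a (m - eR (a j)) t ∧ t.head? = some (a i))).trans ?_)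
    swap
    · congr
    · ext c
      simp only [Finset.mem_filter, Finset.mem_univ, true_and]
      constructor
      · rintro ⟨hbase, hh, ht⟩
        have hb := head?_some_eq hh
        have hL : c.blocks.length = c.blocks.tail.length + 1 := by
          conv_lhs => rw [hb]
          rfl
        obtain ⟨hp', hc', hl', hr', hd'⟩ := hbase
        refine ⟨hh, ⟨?_, ?_, ?_, ?_, ?_⟩, ht⟩
        · intro p hp
          exact hp' p (by rw [hb]; exact List.mem_cons_of_mem _ hp)
        · rw [hb] at hc'
          exact (List.isChain_cons.mp hc').2
        · rw [hm1]; omega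
        · rw [hb, risesL_cons ht, if_pos haji] at hr'
          rw [hm2]; omega
        · rw [hb, dropsL_cons ht, if_neg (not_lt.mpr haji.le)] at hd'
          rw [hm3]; omega
      · rintro ⟨hh, ⟨hp', hc', hl', hr', hd'⟩, ht⟩
        have hb := head?_some_eq hh
        have hL : c.blocks.length = c.blocks.tail.length + 1 := by
          conv_lhs => rw [hb]
          rfl
        rw [hm1] at hl'; rw [hm2] at hr'; rw [hm3] at hd'
        refine ⟨⟨?_, ?_, ?_, ?_, ?_⟩, hh, ht⟩
        · intro p hp
          rw [hb] at hp
          rcases List.mem_cons.mp hp with h' | h'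
          · exact ⟨j, h'.symm⟩
          · exact hp' p h'
        · rw [hb]
          refine List.isChain_cons.mpr ⟨?_, hc'⟩
          intro y hy
          rw [ht] at hy
          simp at hy
          subst hy
          exact haji.ne
        · omega
        · rw [hb, risesL_cons ht, if_pos haji]; omega
        · rw [hb, dropsL_cons ht, if_neg (not_lt.mpr haji.le)]; omega
  · rw [if_neg h]
    unfold cnt
    apply Finset.card_eq_zero.mpr
    apply Finset.eq_empty_iff_forall_notMem.mpr
    intro c hc
    simp only [Finset.mem_filter, Finset.mem_univ, true_and] at hc
    obtain ⟨⟨hp', hc', hl', hr', hd'⟩, hh, ht⟩ := hc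
    have hb := head?_some_eq hh
    apply h
    rw [fin4_le, he0, he1, he2, he3]
    have hsum := c.blocks_sum
    rw [hb] at hsum hl' hr'
    simp at hsum hl'
    rw [risesL_cons ht, if_pos haji] at hr'
    omega

end rise
section dropsec
open scoped Classical
variable {k : ℕ} {a : Fin k → ℕ}

lemma cnt_drop (hmono : StrictMono a) (hpos : ∀ i, 0 < a i) {j i : Fin k} (hij : i < j)
    (m : Fin 4 →₀ ℕ) :
    cnt a m (fun l => l.head? = some (a j) ∧ l.tail.head? = some (a i))
      = if eD (a j) ≤ m then
          cnt a (m - eD (a j)) (fun l => l.head? = some (a i)) else 0 := by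
  obtain ⟨he0, he1, he2, he3⟩ := eD_apply (a j)
  have haij : a i < a j := hmono hij
  by_cases h : eD (a j) ≤ m
  · obtain ⟨h0, h1, h2, h3⟩ := fin4_le.mp h
    rw [if_pos h]
    have hm0 : (m - eD (a j)) 0 = m 0 - a j := by rw [sub_apply4, he0]
    have hm1 : (m - eD (a j)) 1 = m 1 - 1 := by rw [sub_apply4, he1]
    have hm2 : (m - eD (a j)) 2 = m 2 := by rw [sub_apply4, he2]; omega
    have hm3 : (m - eD (a j)) 3 = m 3 - 1 := by rw [sub_apply4, he3]
    rw [he0] at h0; rw [he1] at h1; rw [he3] at h3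
    unfold cnt
    beta_reduce
    refine (congrArg Finset.card ?_).trans ((card_comp_cons (hpos j)
      (by omega : m 0 = a j + (m - eD (a j)) 0)
      (fun t => baseP a (m - eD (a j)) t ∧ t.head? = some (a i))).trans ?_)
    swap
    · congr
    · ext c
      simp only [Finset.mem_filter, Finset.mem_univ, true_and]
      constructor
      · rintro ⟨hbase, hh, ht⟩
        have hb := head?_some_eq hh
        have hL : c.blocks.length = c.blocks.tail.length + 1 := by
          conv_lhs => rw [hb]
          rfl
        obtain ⟨hp', hc', hl', hr', hd'⟩ := hbase
        refine ⟨hh, ⟨?_, ?_, ?_, ?_, ?_⟩, ht⟩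
        · intro p hp
          exact hp' p (by rw [hb]; exact List.mem_cons_of_mem _ hp)
        · rw [hb] at hc'
          exact (List.isChain_cons.mp hc').2
        · rw [hm1]; omega
        · rw [hb, risesL_cons ht, if_neg (not_lt.mpr haij.le)] at hr'
          rw [hm2]; omega
        · rw [hb, dropsL_cons ht, if_pos haij] at hd'
          rw [hm3]; omega
      · rintro ⟨hh, ⟨hp', hc', hl', hr', hd'⟩, ht⟩
        have hb := head?_some_eq hh
        have hL : c.blocks.length = c.blocks.tail.length + 1 := by
          conv_lhs => rw [hb]
          rfl
        rw [hm1] at hl'; rw [hm2] at hr'; rw [hm3] at hd'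
        refine ⟨⟨?_, ?_, ?_, ?_, ?_⟩, hh, ht⟩
        · intro p hp
          rw [hb] at hp
          rcases List.mem_cons.mp hp with h' | h'
          · exact ⟨j, h'.symm⟩
          · exact hp' p h'
        · rw [hb]
          refine List.isChain_cons.mpr ⟨?_, hc'⟩
          intro y hy
          rw [ht] at hy
          simp at hy
          subst hy
          exact haij.ne'
        · omega
        · rw [hb, risesL_cons ht, if_neg (not_lt.mpr haij.le)]; omega
        · rw [hb, dropsL_cons ht, if_pos haij]; omega
  · rw [if_neg h]
    unfold cnt
    apply Finset.card_eq_zero.mpr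
    apply Finset.eq_empty_iff_forall_notMem.mpr
    intro c hc
    simp only [Finset.mem_filter, Finset.mem_univ, true_and] at hc
    obtain ⟨⟨hp', hc', hl', hr', hd'⟩, hh, ht⟩ := hc
    have hb := head?_some_eq hh
    apply h
    rw [fin4_le, he0, he1, he2, he3]
    have hsum := c.blocks_sum
    rw [hb] at hsum hl' hd'
    simp at hsum hl'
    rw [dropsL_cons ht, if_pos haij] at hd'
    omega

end dropsec
section headsplit
open scoped Classical
variable {k : ℕ} {a : Fin k → ℕ}

lemma cnt_head_split (ha : Function.Injective a) (j : Fin k) (m : Fin 4 →₀ ℕ) :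
    cnt a m (fun l => l.head? = some (a j))
      = cnt a m (fun l => l.head? = some (a j) ∧ l.tail.head? = none)
        + ∑ i ∈ Finset.univ.filter (fun i => j < i),
            cnt a m (fun l => l.head? = some (a j) ∧ l.tail.head? = some (a i))
        + ∑ i ∈ Finset.univ.filter (fun i => i < j),
            cnt a m (fun l => l.head? = some (a j) ∧ l.tail.head? = some (a i)) := by
  classical
  set S : Finset (Composition (m 0)) := Finset.univ.filter
    (fun c : Composition (m 0) => baseP a m c.blocks ∧ c.blocks.head? = some (a j)) with hSdef
  have key : S.card = (S.filter (fun c => c.blocks.tail.head? = none)).card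
      + (S.filter (fun c => ¬ c.blocks.tail.head? = none)).card :=
    (Finset.card_filter_add_card_filter_not _).symm
  have h1 : cnt a m (fun l => l.head? = some (a j)) = S.card := by
    unfold cnt; congr
  have h2 : (S.filter (fun c => c.blocks.tail.head? = none)).card
      = cnt a m (fun l => l.head? = some (a j) ∧ l.tail.head? = none) := by
    unfold cnt
    congr 1
    ext c
    simp only [hSdef, Finset.mem_filter, Finset.mem_univ, true_and]
    tauto
  have h3 : (S.filter (fun c => ¬ c.blocks.tail.head? = none)).card
      = ∑ i ∈ Finset.univ.filter (fun i => i ≠ j),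
          cnt a m (fun l => l.head? = some (a j) ∧ l.tail.head? = some (a i)) := by
    have hun : S.filter (fun c => ¬ c.blocks.tail.head? = none)
        = (Finset.univ.filter (fun i : Fin k => i ≠ j)).biUnion
          (fun i => Finset.univ.filter (fun c : Composition (m 0) =>
            baseP a m c.blocks ∧ c.blocks.head? = some (a j)
              ∧ c.blocks.tail.head? = some (a i))) := by
      ext c
      simp only [hSdef, Finset.mem_filter, Finset.mem_biUnion, Finset.mem_univ, true_and]
      constructor
      · rintro ⟨⟨hbase, hh⟩, hne⟩
        obtain ⟨p, hp⟩ := Option.ne_none_iff_exists'.mp hne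
        have hb := head?_some_eq hh
        have htb := head?_some_eq hp
        obtain ⟨i, hi⟩ := hbase.1 p (by
          rw [hb]
          exact List.mem_cons_of_mem _ (by rw [htb]; exact List.mem_cons_self))
        have hij : i ≠ j := by
          intro hrfl
          have hcc := hbase.2.1
          rw [hb, htb] at hcc
          exact (List.isChain_cons_cons.mp hcc).1 (by rw [← hi, hrfl])
        exact ⟨i, hij, hbase, hh, by rw [hp, hi]⟩
      · rintro ⟨i, hij, hbase, hh, ht⟩
        refine ⟨⟨hbase, hh⟩, by rw [ht]; simp⟩
    rw [hun, Finset.card_biUnion]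
    · apply Finset.sum_congr rfl
      intro i _
      unfold cnt
      congr
    · intro i₁ _ i₂ _ hne
      apply Finset.disjoint_left.mpr
      intro c hc1 hc2
      simp only [Finset.mem_filter] at hc1 hc2
      have h1 := hc1.2.2.2
      have h2 := hc2.2.2.2
      rw [h1] at h2
      exact hne (ha (by simpa using h2))
  have h4 : ∑ i ∈ Finset.univ.filter (fun i => i ≠ j),
        cnt a m (fun l => l.head? = some (a j) ∧ l.tail.head? = some (a i))
      = ∑ i ∈ Finset.univ.filter (fun i => j < i),
          cnt a m (fun l => l.head? = some (a j) ∧ l.tail.head? = some (a i))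
        + ∑ i ∈ Finset.univ.filter (fun i => i < j),
            cnt a m (fun l => l.head? = some (a j) ∧ l.tail.head? = some (a i)) := by
    rw [← Finset.sum_union (by
      apply Finset.disjoint_left.mpr
      intro i hi1 hi2
      simp only [Finset.mem_filter] at hi1 hi2
      exact absurd hi1.2 (not_lt.mpr hi2.2.le))]
    apply Finset.sum_congr
    · ext i
      simp only [Finset.mem_filter, Finset.mem_union, Finset.mem_univ, true_and]
      constructor
      · intro hij
        rcases lt_or_gt_of_ne hij with h | h
        · right; exact h
        · left; exact h
      · rintro (h | h)
        · exact h.ne'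
        · exact h.ne
    · intros; rfl
  rw [h1, key, h2, h3, h4]
  omega

lemma cnt_head_zero {j : Fin k} {m : Fin 4 →₀ ℕ} (h : ¬ ee (a j) ≤ m) :
    cnt a m (fun l => l.head? = some (a j)) = 0 := by
  obtain ⟨he0, he1, he2, he3⟩ := ee_apply (a j)
  unfold cnt
  apply Finset.card_eq_zero.mpr
  apply Finset.eq_empty_iff_forall_notMem.mpr
  intro c hc
  simp only [Finset.mem_filter, Finset.mem_univ, true_and] at hc
  obtain ⟨⟨_, _, hl', _, _⟩, hh⟩ := hc
  have hb := head?_some_eq hh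
  apply h
  rw [fin4_le, he0, he1, he2, he3]
  have hsum := c.blocks_sum
  rw [hb] at hsum hl'
  simp at hsum hl'
  omega

lemma cnt_head_eq' (hmono : StrictMono a) (hpos : ∀ i, 0 < a i) (j : Fin k) (m : Fin 4 →₀ ℕ) :
    (cnt a m (fun l => l.head? = some (a j)) : ℤ)
      = if ee (a j) ≤ m then
          ((if m - ee (a j) = 0 then 1 else 0)
            + (if Finsupp.single 2 1 ≤ m - ee (a j) then
                ∑ i ∈ Finset.univ.filter (fun i => j < i),
                  (cnt a (m - ee (a j) - Finsupp.single 2 1)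
                    (fun l => l.head? = some (a i)) : ℤ) else 0)
            + (if Finsupp.single 3 1 ≤ m - ee (a j) then
                ∑ i ∈ Finset.univ.filter (fun i => i < j),
                  (cnt a (m - ee (a j) - Finsupp.single 3 1)
                    (fun l => l.head? = some (a i)) : ℤ) else 0))
        else 0 := by
  by_cases he : ee (a j) ≤ m
  · rw [if_pos he, cnt_head_split hmono.injective j m]
    push_cast
    congr 1
    · congr 1
      · -- nil piece
        rw [cnt_nil hpos j m]
        have : m = ee (a j) ↔ m - ee (a j) = 0 := by
          rw [tsub_eq_zero_iff_le]
          exact ⟨fun h => h.le, fun h => le_antisymm h he⟩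
        split_ifs with h1 h2 h2 <;> push_cast <;> first | rfl | (exfalso; tauto)
      · -- rise piece
        have hcond : eR (a j) ≤ m ↔ Finsupp.single 2 1 ≤ m - ee (a j) := by
          rw [eR, add_comm, ← le_tsub_iff_right he]
        have hsub : m - eR (a j) = m - ee (a j) - Finsupp.single 2 1 := by
          rw [eR, ← tsub_tsub]
        by_cases h2 : eR (a j) ≤ m
        · rw [if_pos (hcond.mp h2)]
          apply Finset.sum_congr rfl
          intro i hi
          rw [cnt_rise hmono hpos (Finset.mem_filter.mp hi).2 m, if_pos h2, hsub]
        · rw [if_neg (fun hc => h2 (hcond.mpr hc))]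
          apply Finset.sum_eq_zero
          intro i hi
          rw [cnt_rise hmono hpos (Finset.mem_filter.mp hi).2 m, if_neg h2]
          simp
    · -- drop piece
      have hcond : eD (a j) ≤ m ↔ Finsupp.single 3 1 ≤ m - ee (a j) := by
        rw [eD, add_comm, ← le_tsub_iff_right he]
      have hsub : m - eD (a j) = m - ee (a j) - Finsupp.single 3 1 := by
        rw [eD, ← tsub_tsub]
      by_cases h2 : eD (a j) ≤ m
      · rw [if_pos (hcond.mp h2)]
        apply Finset.sum_congr rfl
        intro i hi
        rw [cnt_drop hmono hpos (Finset.mem_filter.mp hi).2 m, if_pos h2, hsub]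
      · rw [if_neg (fun hc => h2 (hcond.mpr hc))]
        apply Finset.sum_eq_zero
        intro i hi
        rw [cnt_drop hmono hpos (Finset.mem_filter.mp hi).2 m, if_neg h2]
        simp
  · rw [if_neg he, cnt_head_zero he]
    push_cast

end headsplit
section splitsec
open scoped Classical
variable {k : ℕ} {a : Fin k → ℕ}

/-- Partition of all Carlitz compositions by the head. -/
lemma cnt_split (ha : Function.Injective a) (m : Fin 4 →₀ ℕ) :
    cnt a m (fun _ => True) = (if m = 0 then 1 else 0)
      + ∑ j : Fin k, cnt a m (fun l => l.head? = some (a j)) := by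
  classical
  set S : Finset (Composition (m 0)) :=
    Finset.univ.filter (fun c : Composition (m 0) => baseP a m c.blocks) with hSdef
  have key : S.card = (S.filter (fun c => c.blocks = [])).card
      + (S.filter (fun c => ¬ c.blocks = [])).card :=
    (Finset.card_filter_add_card_filter_not _).symm
  have h1 : cnt a m (fun _ => True) = S.card := by
    unfold cnt
    simp only [and_true, hSdef]
  have h2 : (S.filter (fun c => c.blocks = [])).card = if m = 0 then 1 else 0 := by
    by_cases hm : m = 0
    · rw [if_pos hm]
      subst hm
      apply Finset.card_eq_one.mpr
      refine ⟨⟨[], by simp, by simp⟩, ?_⟩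
      apply Finset.eq_singleton_iff_unique_mem.mpr
      constructor
      · simp only [Finset.mem_filter, hSdef, Finset.mem_univ, true_and]
        exact ⟨⟨by simp, List.isChain_nil, by simp, by simp [risesL], by simp [dropsL]⟩, trivial⟩
      · intro c hc
        apply Composition.ext
        exact (Finset.mem_filter.mp hc).2
    · rw [if_neg hm]
      apply Finset.card_eq_zero.mpr
      apply Finset.eq_empty_iff_forall_notMem.mpr
      intro c hc
      simp only [Finset.mem_filter, hSdef, Finset.mem_univ, true_and] at hc
      obtain ⟨⟨_, _, hlen, hr, hd⟩, hnil⟩ := hc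
      have hsum := c.blocks_sum
      rw [hnil] at hsum hlen hr hd
      exact hm (fin4_ext (by simpa using hsum.symm) (by simpa using hlen.symm)
        (by simpa [risesL] using hr.symm) (by simpa [dropsL] using hd.symm))
  have h3 : (S.filter (fun c => ¬ c.blocks = [])).card
      = ∑ j : Fin k, cnt a m (fun l => l.head? = some (a j)) := by
    have hun : S.filter (fun c => ¬ c.blocks = [])
        = Finset.univ.biUnion
          (fun j : Fin k => Finset.univ.filter
            (fun c : Composition (m 0) => baseP a m c.blocks ∧ c.blocks.head? = some (a j))) := by
      ext c
      simp only [Finset.mem_filter, Finset.mem_biUnion, Finset.mem_univ, true_and]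
      constructor
      · rintro ⟨hS, hne⟩
        obtain ⟨p, hp⟩ := List.exists_mem_of_ne_nil c.blocks hne
        have hbase : baseP a m c.blocks := by
          simpa only [hSdef, Finset.mem_filter, Finset.mem_univ, true_and] using hS
        obtain ⟨x, t, hb⟩ := List.exists_cons_of_ne_nil hne
        obtain ⟨i, hi⟩ := hbase.1 x (by rw [hb]; exact List.mem_cons_self)
        exact ⟨i, hbase, by rw [hb]; simp [hi]⟩
      · rintro ⟨j, hb, hh⟩
        refine ⟨by simp only [hSdef, Finset.mem_filter, Finset.mem_univ, true_and]; exact hb, ?_⟩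
        intro hnil
        rw [hnil] at hh
        simp at hh
    rw [hun, Finset.card_biUnion]
    · apply Finset.sum_congr rfl
      intro j _
      simp only [cnt]
    · intro i _ j _ hij
      apply Finset.disjoint_left.mpr
      intro c hci hcj
      simp only [Finset.mem_filter] at hci hcj
      have : a i = a j := by
        have h1 := hci.2.2
        have h2 := hcj.2.2
        rw [h1] at h2
        simpa using h2
      exact hij (ha this)
  rw [h1, key, h2, h3]


end splitsec

section series
open scoped Classical
open MvPowerSeries

noncomputable def FF {k : ℕ} (a : Fin k → ℕ) (j : Fin k) : MvPowerSeries (Fin 4) ℤ :=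
  fun m => (cnt a m (fun l => l.head? = some (a j)) : ℤ)

variable {k : ℕ} {a : Fin k → ℕ}

lemma X_as_monomial (s : Fin 4) :
    (X s : MvPowerSeries (Fin 4) ℤ) = monomial (Finsupp.single s 1) 1 := rfl

lemma bb_monomial (j : Fin k) : bb a j = monomial (ee (a j)) 1 := by
  rw [bb, X_pow_eq, X_as_monomial, monomial_mul_monomial, one_mul, ee]

lemma coeff_FF (j : Fin k) (m : Fin 4 →₀ ℕ) :
    coeff m (FF a j) = (cnt a m (fun l => l.head? = some (a j)) : ℤ) := rfl

lemma FF_eq (hmono : StrictMono a) (hpos : ∀ i, 0 < a i) (j : Fin k) :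
    FF a j = bb a j * (1 + X 2 * ∑ i ∈ Finset.univ.filter (fun i => j < i), FF a i
        + X 3 * ∑ i ∈ Finset.univ.filter (fun i => i < j), FF a i) := by
  apply MvPowerSeries.ext
  intro m
  rw [bb_monomial, coeff_monomial_mul, coeff_FF, cnt_head_eq' hmono hpos j m]
  by_cases he : ee (a j) ≤ m
  · rw [if_pos he, if_pos he, one_mul, map_add, map_add, coeff_one,
      X_as_monomial 2, X_as_monomial 3, coeff_monomial_mul, coeff_monomial_mul,
      one_mul, one_mul, map_sum, map_sum]
    rfl
  · rw [if_neg he, if_neg he]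

lemma EA_eq (hmono : StrictMono a) :
    EA a = 1 + ∑ j : Fin k, FF a j := by
  apply MvPowerSeries.ext
  intro m
  rw [map_add, coeff_one, map_sum]
  have hcard : (Finset.univ.filter (fun c : Composition (m 0) =>
      (∀ p ∈ c.blocks, ∃ i, a i = p) ∧ c.blocks.Chain' (· ≠ ·) ∧ c.length = m 1 ∧
      risesL c.blocks = m 2 ∧ dropsL c.blocks = m 3)).card
      = cnt a m (fun _ => True) := by
    unfold cnt
    congr 1
    ext c
    simp only [Finset.mem_filter, Finset.mem_univ, true_and, baseP, and_true,
      Composition.blocks_length]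
  have h0 : coeff m (EA a) = (cnt a m (fun _ => True) : ℤ) := by
    rw [← hcard]; rfl
  rw [h0, cnt_split hmono.injective m]
  push_cast [apply_ite (Nat.cast : ℕ → ℤ)]
  rfl

end series
section algebra
open scoped Classical
open MvPowerSeries

variable {k : ℕ} (a : Fin k → ℕ)

noncomputable def Tn (n : ℕ) : MvPowerSeries (Fin 4) ℤ :=
  ∑ i ∈ Finset.univ.filter (fun i : Fin k => n ≤ i.val), FF a i

noncomputable def Pn (n : ℕ) : MvPowerSeries (Fin 4) ℤ :=
  ∏ i ∈ Finset.univ.filter (fun i : Fin k => n ≤ i.val), (1 + bb a i * X 3)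

noncomputable def Sn (n : ℕ) : MvPowerSeries (Fin 4) ℤ :=
  ∑ l ∈ Finset.univ.filter (fun l : Fin k => n ≤ l.val),
    bb a l * (∏ i ∈ Finset.univ.filter (fun i : Fin k => n ≤ i.val ∧ i < l), (1 + bb a i * X 2))
      * (∏ i ∈ Finset.univ.filter (fun i : Fin k => l < i), (1 + bb a i * X 3))

lemma filter_insert_step {n : ℕ} (hn : n < k) :
    Finset.univ.filter (fun i : Fin k => n ≤ i.val)
      = insert ⟨n, hn⟩ (Finset.univ.filter (fun i : Fin k => n + 1 ≤ i.val)) := by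
  ext i
  simp only [Finset.mem_filter, Finset.mem_univ, true_and, Finset.mem_insert, Fin.ext_iff]
  omega

lemma not_mem_step {n : ℕ} (hn : n < k) :
    (⟨n, hn⟩ : Fin k) ∉ Finset.univ.filter (fun i : Fin k => n + 1 ≤ i.val) := by
  simp

lemma filter_gt_eq {n : ℕ} (hn : n < k) :
    Finset.univ.filter (fun i : Fin k => (⟨n, hn⟩ : Fin k) < i)
      = Finset.univ.filter (fun i : Fin k => n + 1 ≤ i.val) := by
  ext i
  simp only [Finset.mem_filter, Finset.mem_univ, true_and, Fin.lt_def]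
  omega

lemma Cstar (hmono : StrictMono a) (hpos : ∀ i, 0 < a i) {n : ℕ} (hn : n < k) :
    Tn a n * (1 + bb a ⟨n, hn⟩ * X 3)
      = bb a ⟨n, hn⟩ * (1 + X 3 * Tn a 0) + (1 + bb a ⟨n, hn⟩ * X 2) * Tn a (n + 1) := by
  have hTn : Tn a n = FF a ⟨n, hn⟩ + Tn a (n + 1) := by
    unfold Tn
    rw [filter_insert_step hn, Finset.sum_insert (not_mem_step hn)]
  have hF : FF a ⟨n, hn⟩ = bb a ⟨n, hn⟩ * (1 + X 2 * Tn a (n + 1)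
      + X 3 * ∑ i ∈ Finset.univ.filter (fun i : Fin k => i < ⟨n, hn⟩), FF a i) := by
    unfold Tn
    rw [FF_eq hmono hpos ⟨n, hn⟩, filter_gt_eq hn]
  have hT : Tn a 0 = (∑ i ∈ Finset.univ.filter (fun i : Fin k => i < ⟨n, hn⟩), FF a i)
      + Tn a n := by
    unfold Tn
    rw [← Finset.sum_filter_add_sum_filter_not
      (Finset.univ.filter (fun i : Fin k => 0 ≤ i.val)) (fun i : Fin k => i < ⟨n, hn⟩) (FF a)]
    congr 1
    · congr 1
      ext i
      simp [Fin.lt_def]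
    · congr 1
      ext i
      simp only [Finset.mem_filter, Finset.mem_univ, true_and, Fin.lt_def]
      omega
  rw [hT, hTn, hF]
  ring

lemma Cmain (hmono : StrictMono a) (hpos : ∀ i, 0 < a i) :
    ∀ t n, n + t = k → Tn a n * Pn a n = (1 + X 3 * Tn a 0) * Sn a n := by
  intro t
  induction t with
  | zero =>
    intro n hnk
    have hempty : Finset.univ.filter (fun i : Fin k => n ≤ i.val) = ∅ := by
      apply Finset.filter_false_of_mem
      intro i _
      omega
    unfold Tn Sn
    rw [hempty, Finset.sum_empty, Finset.sum_empty, zero_mul, mul_zero]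
  | succ t ih =>
    intro n hnk
    have hn : n < k := by omega
    have hTn : Tn a n = FF a ⟨n, hn⟩ + Tn a (n + 1) := by
      unfold Tn
      rw [filter_insert_step hn, Finset.sum_insert (not_mem_step hn)]
    have hPn : Pn a n = (1 + bb a ⟨n, hn⟩ * X 3) * Pn a (n + 1) := by
      unfold Pn
      rw [filter_insert_step hn, Finset.prod_insert (not_mem_step hn)]
    have hSn : Sn a n = bb a ⟨n, hn⟩ * Pn a (n + 1)
        + (1 + bb a ⟨n, hn⟩ * X 2) * Sn a (n + 1) := by
      unfold Sn Pn
      rw [filter_insert_step hn, Finset.sum_insert (not_mem_step hn)]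
      congr 1
      · have h1 : Finset.univ.filter (fun i : Fin k => n ≤ i.val ∧ i < ⟨n, hn⟩) = ∅ := by
          apply Finset.filter_false_of_mem
          intro i _
          have hv : ((⟨n, hn⟩ : Fin k) : ℕ) = n := rfl
          rw [Fin.lt_def, hv]
          omega
        rw [h1, Finset.prod_empty, mul_one, filter_gt_eq hn]
      · rw [Finset.mul_sum]
        apply Finset.sum_congr rfl
        intro l hl
        simp only [Finset.mem_filter, Finset.mem_univ, true_and] at hl
        have h2 : Finset.univ.filter (fun i : Fin k => n ≤ i.val ∧ i < l)
            = insert ⟨n, hn⟩ (Finset.univ.filter (fun i : Fin k => n + 1 ≤ i.val ∧ i < l)) := by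
          have hv : ((⟨n, hn⟩ : Fin k) : ℕ) = n := rfl
          ext i
          simp only [Finset.mem_filter, Finset.mem_univ, true_and, Finset.mem_insert,
            Fin.ext_iff, Fin.lt_def]
          omega
        have h3 : (⟨n, hn⟩ : Fin k) ∉
            Finset.univ.filter (fun i : Fin k => n + 1 ≤ i.val ∧ i < l) := by
          simp
        rw [h2, Finset.prod_insert h3]
        ring
    have hstar := Cstar a hmono hpos hn
    have hih := ih (n + 1) (by omega)
    calc Tn a n * Pn a n = (Tn a n * (1 + bb a ⟨n, hn⟩ * X 3)) * Pn a (n + 1) := by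
          rw [hPn]; ring
      _ = (bb a ⟨n, hn⟩ * (1 + X 3 * Tn a 0)
            + (1 + bb a ⟨n, hn⟩ * X 2) * Tn a (n + 1)) * Pn a (n + 1) := by
          rw [hstar]
      _ = bb a ⟨n, hn⟩ * (1 + X 3 * Tn a 0) * Pn a (n + 1)
            + (1 + bb a ⟨n, hn⟩ * X 2) * (Tn a (n + 1) * Pn a (n + 1)) := by ring
      _ = bb a ⟨n, hn⟩ * (1 + X 3 * Tn a 0) * Pn a (n + 1)
            + (1 + bb a ⟨n, hn⟩ * X 2) * ((1 + X 3 * Tn a 0) * Sn a (n + 1)) := by rw [hih]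
      _ = (1 + X 3 * Tn a 0) * (bb a ⟨n, hn⟩ * Pn a (n + 1)
            + (1 + bb a ⟨n, hn⟩ * X 2) * Sn a (n + 1)) := by ring
      _ = (1 + X 3 * Tn a 0) * Sn a n := by rw [hSn]

end algebra


theorem stmt12 {k : ℕ} (hk : 1 ≤ k) (a : Fin k → ℕ) (hpos : ∀ i, 0 < a i)
    (hmono : StrictMono a) :
    (EA a - 1) * ((∏ i : Fin k, (1 + bb a i * X 3))
        - X 3 * ∑ j : Fin k, bb a j
            * (∏ i ∈ Finset.univ.filter (· < j), (1 + bb a i * X 2))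
            * (∏ i ∈ Finset.univ.filter (j < ·), (1 + bb a i * X 3)))
    = ∑ j : Fin k, bb a j
        * (∏ i ∈ Finset.univ.filter (· < j), (1 + bb a i * X 2))
        * (∏ i ∈ Finset.univ.filter (j < ·), (1 + bb a i * X 3)) := by
  have hC := Cmain a hmono hpos k 0 (by omega)
  have hT0 : Tn a 0 = ∑ j : Fin k, FF a j := by
    unfold Tn
    apply Finset.sum_congr
    · ext i; simp
    · intros; rfl
  have hP0 : Pn a 0 = ∏ i : Fin k, (1 + bb a i * X 3) := by
    unfold Pn
    apply Finset.prod_congr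
    · ext i; simp
    · intros; rfl
  have hS0 : Sn a 0 = ∑ j : Fin k, bb a j
      * (∏ i ∈ Finset.univ.filter (· < j), (1 + bb a i * X 2))
      * (∏ i ∈ Finset.univ.filter (j < ·), (1 + bb a i * X 3)) := by
    unfold Sn
    apply Finset.sum_congr
    · ext l; simp
    · intro l _
      congr 2
      ext i
      simp
  rw [EA_eq hmono, ← hT0, ← hP0, ← hS0]
  linear_combination hC
end

section
/- Let k ≥ 1 and let a_1 < a_2 < … < a_k be positive integers, A = {a_1,…,a_k}. In ℤ[[x,y,r]] set D_i = 1 + x^{2a_i}·y^2·r for 1 ≤ i ≤ k, and let F_A(x;y;r) = ∑_{n≥0} ∑_{σ∈F_n^A} x^n y^{parts(σ)} r^{rises(σ)}. Then ( F_A(x;y;r) − 1 ) · ( ∏_{i=1}^k D_i − r·∑_{i=1}^k x^{2a_i}·y^2 · ∏_{j≠i} D_j ) = ∑_{i=1}^k x^{a_i}·y · ∏_{j≠i} D_j. (This is the denominator-cleared form of F_A = 1 + [∑_i x^{a_i}y/D_i] / [1 − ∑_i x^{2a_i}y^2 r/D_i].) -/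
open scoped Classical

open MvPowerSeries

/-- The generating function `F_A(x;y;r)` in `ℤ[[x,y,r]]`, with `x = X 0`,
`y = X 1`, `r = X 2`: the coefficient of `x^n y^p r^s` is the number of
Carlitz palindromic compositions of `n` with parts in `A = {a 1, …, a k}`,
with `p` parts and `s` rises. -/
noncomputable def FA {k : ℕ} (a : Fin k → ℕ) : MvPowerSeries (Fin 3) ℤ :=
  fun m => ((Finset.univ.filter (fun c : Composition (m 0) =>
      (∀ p ∈ c.blocks, ∃ i, a i = p) ∧ c.blocks.Chain' (· ≠ ·) ∧
      c.blocks.reverse = c.blocks ∧ c.length = m 1 ∧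
      risesL c.blocks = m 2)).card : ℤ)

/-- `D i = 1 + x^{2a_i} y² r`. -/
noncomputable def DD {k : ℕ} (a : Fin k → ℕ) (i : Fin k) : MvPowerSeries (Fin 3) ℤ :=
  1 + (X 0) ^ (2 * a i) * (X 1) ^ 2 * X 2

theorem List.chain'_cons' {α : Type*} {R : α → α → Prop} {x : α} {l : List α} :
    List.Chain' R (x :: l) ↔ (∀ y ∈ l.head?, R x y) ∧ List.Chain' R l := List.isChain_cons

theorem List.chain'_reverse {α : Type*} {R : α → α → Prop} {l : List α} :
    List.Chain' R l.reverse ↔ List.Chain' (fun a b => R b a) l := List.isChain_reverse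

theorem List.chain'_append {α : Type*} {R : α → α → Prop} {l₁ l₂ : List α} :
    List.Chain' R (l₁ ++ l₂) ↔
      List.Chain' R l₁ ∧ List.Chain' R l₂ ∧ ∀ x ∈ l₁.getLast?, ∀ y ∈ l₂.head?, R x y :=
  List.isChain_append

theorem List.chain'_map {α β : Type*} {R : α → α → Prop} (f : β → α) {l : List β} :
    List.Chain' R (l.map f) ↔ List.Chain' (fun a b : β => R (f a) (f b)) l :=
  List.isChain_map f

namespace Stmt16

open List Finset

lemma risesL_nil : risesL [] = 0 := rfl

lemma risesL_single (x : ℕ) : risesL [x] = 0 := rfl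

lemma risesL_cons (x y : ℕ) (t : List ℕ) :
    risesL (x :: y :: t) = (if x < y then 1 else 0) + risesL (y :: t) := by
  simp only [risesL, List.zip_cons_cons, List.tail_cons, List.countP_cons]
  by_cases h : x < y <;> simp [h] <;> omega

lemma risesL_concat : ∀ (l : List ℕ) (y : ℕ), l.getLast? = some y → ∀ (x : ℕ),
    risesL (l ++ [x]) = risesL l + (if y < x then 1 else 0)
  | [], y, hy, x => by simp at hy
  | [z], y, hy, x => by
      simp only [List.getLast?_singleton, Option.some.injEq] at hy
      subst hy
      simp only [List.cons_append, List.nil_append]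
      rw [risesL_cons]
      simp [risesL_single, risesL_nil]
  | z :: w :: t, y, hy, x => by
      rw [List.getLast?_cons_cons] at hy
      have IH := risesL_concat (w :: t) y hy x
      simp only [List.cons_append] at IH ⊢
      rw [risesL_cons, risesL_cons, IH]
      ring

lemma head?_eq_getLast?_of_palindrome {l : List ℕ} (hrev : l.reverse = l) :
    l.head? = l.getLast? := by
  rw [← List.head?_reverse (l := l), hrev]

lemma risesL_palindrome : ∀ (n : ℕ) (l : List ℕ), l.length = n → l ≠ [] →
    l.reverse = l → l.Chain' (· ≠ ·) → 2 * risesL l + 1 = l.length := by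
  intro n
  induction n using Nat.strong_induction_on with
  | _ n ih =>
    intro l hn hne hrev hch
    obtain ⟨x, s, rfl⟩ := List.exists_cons_of_ne_nil hne
    rcases List.eq_nil_or_concat s with rfl | ⟨t, y, rfl⟩
    · simp [risesL_single]
    · simp only [List.concat_eq_append] at *
      -- l = x :: (t ++ [y])
      have hthis : y :: (t.reverse ++ [x]) = x :: (t ++ [y]) := by
        have := hrev
        simpa [List.reverse_cons, List.reverse_append] using this
      have hyx : y = x := (List.cons_eq_cons.mp hthis).1
      subst hyx
      have htrev : t.reverse = t :=
        List.append_cancel_right (List.cons_eq_cons.mp hthis).2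
      rcases eq_or_ne t [] with rfl | htne
      · simp [List.Chain'] at hch
      · obtain ⟨h, tt, rfl⟩ := List.exists_cons_of_ne_nil htne
        simp only [List.cons_append] at hn hrev hch ⊢
        have hch' : List.Chain' (· ≠ ·) ((h :: tt) ++ [y]) ∧ y ≠ h := by
          rw [List.chain'_cons'] at hch
          exact ⟨hch.2, hch.1 h (by simp)⟩
        have hchain_t : List.Chain' (· ≠ ·) (h :: tt) :=
          hch'.1.prefix ⟨[y], rfl⟩
        have hlast : (h :: tt).getLast? = some h := by
          have h1 : (h :: tt).head? = (h :: tt).getLast? :=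
            head?_eq_getLast?_of_palindrome htrev
          simpa using h1.symm
        have IH : 2 * risesL (h :: tt) + 1 = (h :: tt).length := by
          apply ih (h :: tt).length _ _ rfl (by simp) htrev hchain_t
          simp only [← hn]
          simp [List.length_append]
        have hr1 : risesL (y :: h :: (tt ++ [y])) =
            (if y < h then 1 else 0) + risesL (h :: (tt ++ [y])) :=
          risesL_cons y h (tt ++ [y])
        have hr2 : risesL (h :: (tt ++ [y])) =
            risesL (h :: tt) + (if h < y then 1 else 0) := by
          have := risesL_concat (h :: tt) h hlast y
          simpa [List.cons_append] using this
        have hne' : y ≠ h := hch'.2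
        have hone : (if y < h then 1 else 0) + (if h < y then 1 else 0) = 1 := by
          by_cases h1 : y < h <;> by_cases h2 : h < y <;> simp [h1, h2] <;> omega
        have hlen : (y :: h :: (tt ++ [y])).length = (h :: tt).length + 2 := by
          simp
        rw [hr1, hr2, hlen]
        omega

/-- Palindromization of a nonempty list. -/
def pal (l : List ℕ) : List ℕ := l ++ l.dropLast.reverse

lemma pal_reverse {l : List ℕ} (h : l ≠ []) : (pal l).reverse = pal l := by
  have h1 := List.dropLast_append_getLast h
  unfold pal
  rw [List.reverse_append, List.reverse_reverse]
  conv_lhs => rw [← h1, List.reverse_append]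
  conv_rhs => rw [← h1]
  simp

lemma pal_length {l : List ℕ} (h : l ≠ []) : (pal l).length = 2 * l.length - 1 := by
  have : l.length ≠ 0 := by simpa using (List.length_pos_iff.mpr h).ne'
  simp [pal, List.length_dropLast]; omega

lemma pal_sum {l : List ℕ} : (pal l).sum = l.sum + l.dropLast.sum := by
  simp [pal, List.sum_reverse]

lemma pal_take {l : List ℕ} : (pal l).take l.length = l := by
  simpa [pal] using List.take_left l l.dropLast.reverse

lemma pal_chain' {l : List ℕ} (h : l ≠ []) (hc : l.Chain' (· ≠ ·)) :
    (pal l).Chain' (· ≠ ·) := by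
  have hrevl : l.reverse = l.getLast h :: l.dropLast.reverse := by
    conv_lhs => rw [← List.dropLast_append_getLast h]
    simp
  have hc' : List.Chain' (· ≠ ·) l.reverse := by
    rw [List.chain'_reverse]
    exact hc.imp fun _ _ h' => h'.symm
  rw [hrevl, List.chain'_cons'] at hc'
  rw [pal, List.chain'_append]
  refine ⟨hc, hc'.2, ?_⟩
  intro x hx y hy
  have hxl : x = l.getLast h := by
    rw [List.getLast?_eq_getLast h] at hx
    simpa using hx.symm
  subst hxl
  exact hc'.1 y hy

lemma half_recover {l : List ℕ} {L : ℕ} (hrev : l.reverse = l)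
    (hlen : l.length = 2 * L - 1) (hL : 1 ≤ L) : pal (l.take L) = l := by
  have hlen' : (l.take L).length = L := by
    rw [List.length_take]; omega
  have h1 : (l.take L).dropLast = l.take (L - 1) := by
    rw [List.dropLast_eq_take, hlen', List.take_take]
    congr 1; omega
  have h2 : (l.take (L - 1)).reverse = l.drop L := by
    rw [List.reverse_take, hrev]
    congr 1; omega
  unfold pal
  rw [h1, h2, List.take_append_drop]


/-! ### Counting lists over `Fin k` -/

def listsLen (k : ℕ) : ℕ → Finset (List (Fin k))
  | 0 => {[]}
  | n + 1 => (Finset.univ ×ˢ listsLen k n).image fun p => p.1 :: p.2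

lemma mem_listsLen {k n : ℕ} {l : List (Fin k)} : l ∈ listsLen k n ↔ l.length = n := by
  induction n generalizing l with
  | zero => simp [listsLen, List.length_eq_zero_iff]
  | succ n ih =>
    cases l with
    | nil => simp [listsLen]
    | cons x t => simp [listsLen, ih]

def okA {k : ℕ} (a : Fin k → ℕ) (m : Fin 3 →₀ ℕ) (h : List (Fin k)) : Prop :=
  h ≠ [] ∧ h.Chain' (· ≠ ·) ∧ (h.map a).sum + (h.map a).dropLast.sum = m 0 ∧
    2 * h.length = m 1 + 1 ∧ h.length = m 2 + 1

noncomputable def cnt {k : ℕ} (a : Fin k → ℕ) (P : List (Fin k) → Prop) (m : Fin 3 →₀ ℕ) : ℕ :=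
  ((listsLen k ((m 1 + 1) / 2)).filter (fun h => okA a m h ∧ P h)).card

noncomputable def T {k : ℕ} (a : Fin k → ℕ) (i : Fin k) : MvPowerSeries (Fin 3) ℤ :=
  fun m => (cnt a (fun h => h.head? = some i) m : ℤ)

noncomputable def SS {k : ℕ} (a : Fin k → ℕ) : MvPowerSeries (Fin 3) ℤ :=
  fun m => (cnt a (fun _ => True) m : ℤ)

lemma cnt_congr {k : ℕ} {a : Fin k → ℕ} {m : Fin 3 →₀ ℕ} {P Q : List (Fin k) → Prop}
    (hPQ : ∀ h, okA a m h → (P h ↔ Q h)) : cnt a P m = cnt a Q m := by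
  unfold cnt
  congr 1
  apply Finset.filter_congr
  intro h _
  constructor
  · rintro ⟨h1, h2⟩; exact ⟨h1, (hPQ h h1).mp h2⟩
  · rintro ⟨h1, h2⟩; exact ⟨h1, (hPQ h h1).mpr h2⟩

lemma head?_eq_some_headI {k : ℕ} [Inhabited (Fin k)] {h : List (Fin k)} (hne : h ≠ []) :
    h.head? = some h.headI := by
  cases h with
  | nil => exact absurd rfl hne
  | cons x t => rfl

lemma sum_cnt {k : ℕ} (hk : 1 ≤ k) (a : Fin k → ℕ) (m : Fin 3 →₀ ℕ) (t : Finset (Fin k)) :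
    ∑ j ∈ t, cnt a (fun h => h.head? = some j) m
      = cnt a (fun h => ∃ j ∈ t, h.head? = some j) m := by
  letI : Inhabited (Fin k) := ⟨⟨0, hk⟩⟩
  unfold cnt
  rw [Finset.card_eq_sum_card_fiberwise (f := fun h : List (Fin k) => h.headI) (t := t) ?_]
  · refine Finset.sum_congr rfl fun j hj => ?_
    congr 1
    ext h
    simp only [Finset.mem_filter]
    constructor
    · rintro ⟨hmem, hok, hhead⟩
      have hI : h.headI = j := by
        rw [head?_eq_some_headI hok.1] at hhead
        exact Option.some_inj.mp hhead
      exact ⟨⟨hmem, hok, j, hj, hhead⟩, hI⟩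
    · rintro ⟨⟨hmem, hok, _⟩, hI⟩
      refine ⟨hmem, hok, ?_⟩
      rw [head?_eq_some_headI hok.1, hI]
  · intro h hh
    simp only [Finset.mem_filter] at hh
    obtain ⟨hok, j, hj, hhead⟩ := (Finset.mem_filter.mp hh).2
    have : h.headI = j := by
      rw [head?_eq_some_headI hok.1] at hhead
      exact Option.some_inj.mp hhead
    simpa [this] using hj

lemma sum_cnt_univ {k : ℕ} (hk : 1 ≤ k) (a : Fin k → ℕ) (m : Fin 3 →₀ ℕ) :
    ∑ j : Fin k, cnt a (fun h => h.head? = some j) m = cnt a (fun _ => True) m := by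
  letI : Inhabited (Fin k) := ⟨⟨0, hk⟩⟩
  rw [sum_cnt hk a m Finset.univ]
  apply cnt_congr
  intro h hok
  simp only [Finset.mem_univ, true_and, iff_true]
  exact ⟨h.headI, head?_eq_some_headI hok.1⟩

lemma sum_cnt_erase {k : ℕ} (hk : 1 ≤ k) (a : Fin k → ℕ) (m : Fin 3 →₀ ℕ) (i : Fin k) :
    ∑ j ∈ Finset.univ.erase i, cnt a (fun h => h.head? = some j) m
      = cnt a (fun h => h.head? ≠ some i) m := by
  letI : Inhabited (Fin k) := ⟨⟨0, hk⟩⟩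
  rw [sum_cnt hk a m _]
  apply cnt_congr
  intro h hok
  constructor
  · rintro ⟨j, hj, hhead⟩
    rw [hhead]
    simp only [Finset.mem_erase, Finset.mem_univ, and_true] at hj
    simpa using hj
  · intro hne
    refine ⟨h.headI, ?_, head?_eq_some_headI hok.1⟩
    simp only [Finset.mem_erase, Finset.mem_univ, and_true]
    intro hcon
    rw [head?_eq_some_headI hok.1, hcon] at hne
    exact hne rfl

/-! ### Exponent vectors -/

noncomputable def ew {k : ℕ} (a : Fin k → ℕ) (i : Fin k) : Fin 3 →₀ ℕ :=
  Finsupp.single 0 (2 * a i) + Finsupp.single 1 2 + Finsupp.single 2 1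

noncomputable def ev {k : ℕ} (a : Fin k → ℕ) (i : Fin k) : Fin 3 →₀ ℕ :=
  Finsupp.single 0 (a i) + Finsupp.single 1 1

lemma ew_apply0 {k : ℕ} (a : Fin k → ℕ) (i : Fin k) : ew a i 0 = 2 * a i := by
  simp [ew, Finsupp.single_apply]
lemma ew_apply1 {k : ℕ} (a : Fin k → ℕ) (i : Fin k) : ew a i 1 = 2 := by
  simp [ew, Finsupp.single_apply]
lemma ew_apply2 {k : ℕ} (a : Fin k → ℕ) (i : Fin k) : ew a i 2 = 1 := by
  simp [ew, Finsupp.single_apply]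
lemma ev_apply0 {k : ℕ} (a : Fin k → ℕ) (i : Fin k) : ev a i 0 = a i := by
  simp [ev, Finsupp.single_apply]
lemma ev_apply1 {k : ℕ} (a : Fin k → ℕ) (i : Fin k) : ev a i 1 = 1 := by
  simp [ev, Finsupp.single_apply]
lemma ev_apply2 {k : ℕ} (a : Fin k → ℕ) (i : Fin k) : ev a i 2 = 0 := by
  simp [ev, Finsupp.single_apply]

lemma le3 {e m : Fin 3 →₀ ℕ} : e ≤ m ↔ e 0 ≤ m 0 ∧ e 1 ≤ m 1 ∧ e 2 ≤ m 2 := by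
  rw [Finsupp.le_def]
  constructor
  · intro h; exact ⟨h 0, h 1, h 2⟩
  · rintro ⟨h0, h1, h2⟩ s
    fin_cases s
    · exact h0
    · exact h1
    · exact h2

lemma eq3 {e m : Fin 3 →₀ ℕ} : e = m ↔ e 0 = m 0 ∧ e 1 = m 1 ∧ e 2 = m 2 := by
  constructor
  · rintro rfl; exact ⟨rfl, rfl, rfl⟩
  · rintro ⟨h0, h1, h2⟩
    apply Finsupp.ext
    intro s
    fin_cases s
    · exact h0
    · exact h1
    · exact h2


/-! ### The recursion for `cnt` -/

lemma cnt_singleton {k : ℕ} (a : Fin k → ℕ) (i : Fin k) (m : Fin 3 →₀ ℕ) :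
    ((listsLen k ((m 1 + 1) / 2)).filter
        (fun h => (okA a m h ∧ h.head? = some i) ∧ h.length = 1)).card
      = if m = ev a i then 1 else 0 := by
  by_cases hm : m = ev a i
  · subst hm
    rw [if_pos rfl]
    have : (listsLen k ((ev a i 1 + 1) / 2)).filter
        (fun h => (okA a (ev a i) h ∧ h.head? = some i) ∧ h.length = 1) = {[i]} := by
      ext h
      simp only [Finset.mem_filter, mem_listsLen, Finset.mem_singleton]
      constructor
      · rintro ⟨_, ⟨_, hhead⟩, hlen1⟩
        obtain ⟨x, rfl⟩ := List.length_eq_one_iff.mp hlen1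
        simp only [List.head?_cons, Option.some.injEq] at hhead
        rw [hhead]
      · rintro rfl
        refine ⟨by simp [ev_apply1], ⟨⟨by simp, List.isChain_singleton _, ?_, ?_, ?_⟩, rfl⟩, rfl⟩
        · simp [ev_apply0]
        · simp [ev_apply1]
        · simp [ev_apply2]
    rw [this, Finset.card_singleton]
  · rw [if_neg hm, Finset.card_eq_zero, Finset.eq_empty_iff_forall_notMem]
    intro h hh
    simp only [Finset.mem_filter, mem_listsLen] at hh
    obtain ⟨_, ⟨hok, hhead⟩, hlen1⟩ := hh
    obtain ⟨x, rfl⟩ := List.length_eq_one_iff.mp hlen1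
    simp only [List.head?_cons, Option.some.injEq] at hhead
    subst hhead
    obtain ⟨_, _, hsum, hl1, hl2⟩ := hok
    simp only [List.map_cons, List.map_nil, List.sum_cons, List.sum_nil,
      List.dropLast_singleton, List.length_cons, List.length_nil] at hsum hl1 hl2
    apply hm
    rw [eq3, ev_apply0, ev_apply1, ev_apply2]
    omega

lemma cons_tail_of_head? {k : ℕ} {h : List (Fin k)} {i : Fin k}
    (hh : h.head? = some i) : i :: h.tail = h := by
  cases h with
  | nil => simp at hh
  | cons x t =>
    simp only [List.head?_cons, Option.some.injEq] at hh
    subst hh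
    rfl

lemma cnt_len2 {k : ℕ} (a : Fin k → ℕ) (i : Fin k) (m : Fin 3 →₀ ℕ)
    (he : ew a i ≤ m) :
    ((listsLen k ((m 1 + 1) / 2)).filter
        (fun h => (okA a m h ∧ h.head? = some i) ∧ ¬ h.length = 1)).card
      = cnt a (fun h => h.head? ≠ some i) (m - ew a i) := by
  obtain ⟨he0, he1, he2⟩ := le3.mp he
  rw [ew_apply0] at he0; rw [ew_apply1] at he1; rw [ew_apply2] at he2
  have hm0 : (m - ew a i) 0 = m 0 - 2 * a i := by
    rw [Finsupp.tsub_apply, ew_apply0]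
  have hm1 : (m - ew a i) 1 = m 1 - 2 := by
    rw [Finsupp.tsub_apply, ew_apply1]
  have hm2 : (m - ew a i) 2 = m 2 - 1 := by
    rw [Finsupp.tsub_apply, ew_apply2]
  unfold cnt
  apply Finset.card_bij' (fun h _ => h.tail) (fun t _ => i :: t)
  · -- forward membership
    intro h hh
    simp only [Finset.mem_filter, mem_listsLen] at hh ⊢
    obtain ⟨hLmem, ⟨⟨hne, hch, hsum, hl1, hl2⟩, hhead⟩, hlen1⟩ := hh
    obtain ⟨x, t, rfl⟩ := List.exists_cons_of_ne_nil hne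
    simp only [List.head?_cons, Option.some.injEq] at hhead
    subst hhead
    simp only [List.tail_cons]
    have htne : t ≠ [] := by
      intro hcon
      subst hcon
      simp at hl1
      omega
    have hmapne : t.map a ≠ [] := by simpa using htne
    rw [List.chain'_cons'] at hch
    simp only [List.map_cons, List.sum_cons, List.length_cons,
      List.dropLast_cons_of_ne_nil hmapne, List.sum_cons] at hsum hl1 hl2
    refine ⟨?_, ⟨⟨htne, hch.2, ?_, ?_, ?_⟩, ?_⟩⟩
    · rw [hm1]; omega
    · rw [hm0]; omega
    · rw [hm1]; omega
    · rw [hm2]; omega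
    · obtain ⟨y, tt, rfl⟩ := List.exists_cons_of_ne_nil htne
      simp only [List.head?_cons, ne_eq, Option.some.injEq]
      intro hcon
      exact hch.1 y rfl hcon.symm
  · -- backward membership
    intro t ht
    simp only [Finset.mem_filter, mem_listsLen] at ht ⊢
    obtain ⟨hLmem, ⟨htne, hch, hsum, hl1, hl2⟩, hhead⟩ := ht
    rw [hm0] at hsum; rw [hm1] at hl1; rw [hm2] at hl2
    have hmapne : t.map a ≠ [] := by simpa using htne
    refine ⟨?_, ⟨⟨by simp, ?_, ?_, ?_, ?_⟩, rfl⟩, ?_⟩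
    · simp only [List.length_cons]; omega
    · rw [List.chain'_cons']
      refine ⟨?_, hch⟩
      intro y hy hcon
      rw [hcon] at hhead
      exact hhead hy
    · simp only [List.map_cons, List.sum_cons,
        List.dropLast_cons_of_ne_nil hmapne, List.sum_cons]
      omega
    · simp only [List.length_cons]; omega
    · simp only [List.length_cons]; omega
    · simp only [List.length_cons]
      have : t.length ≠ 0 := by simpa using htne
      omega
  · intro h hh
    simp only [Finset.mem_filter] at hh
    exact cons_tail_of_head? hh.2.1.2
  · intro t _
    rfl

lemma cnt_len2_empty {k : ℕ} (a : Fin k → ℕ) (i : Fin k) (m : Fin 3 →₀ ℕ)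
    (hne : ¬ ew a i ≤ m) :
    ((listsLen k ((m 1 + 1) / 2)).filter
        (fun h => (okA a m h ∧ h.head? = some i) ∧ ¬ h.length = 1)).card = 0 := by
  rw [Finset.card_eq_zero, Finset.eq_empty_iff_forall_notMem]
  intro h hh
  simp only [Finset.mem_filter, mem_listsLen] at hh
  obtain ⟨hLmem, ⟨⟨hne', hch, hsum, hl1, hl2⟩, hhead⟩, hlen1⟩ := hh
  obtain ⟨x, t, rfl⟩ := List.exists_cons_of_ne_nil hne'
  simp only [List.head?_cons, Option.some.injEq] at hhead
  subst hhead
  have htne : t ≠ [] := by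
    intro hcon
    subst hcon
    simp at hl1
    omega
  have hmapne : t.map a ≠ [] := by simpa using htne
  simp only [List.map_cons, List.sum_cons, List.length_cons,
    List.dropLast_cons_of_ne_nil hmapne, List.sum_cons] at hsum hl1 hl2
  apply hne
  rw [le3, ew_apply0, ew_apply1, ew_apply2]
  omega

lemma cnt_rec_nat {k : ℕ} (a : Fin k → ℕ) (i : Fin k) (m : Fin 3 →₀ ℕ) :
    cnt a (fun h => h.head? = some i) m
      = (if m = ev a i then 1 else 0)
        + (if ew a i ≤ m then
            cnt a (fun h => h.head? ≠ some i) (m - ew a i) else 0) := by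
  have hsplit := Finset.card_filter_add_card_filter_not
    (s := (listsLen k ((m 1 + 1) / 2)).filter (fun h => okA a m h ∧ h.head? = some i))
    (p := fun h => h.length = 1)
  rw [Finset.filter_filter, Finset.filter_filter] at hsplit
  have hc : cnt a (fun h => h.head? = some i) m
      = ((listsLen k ((m 1 + 1) / 2)).filter
          (fun h => okA a m h ∧ h.head? = some i)).card := by
    simp only [cnt]
  rw [hc, ← hsplit, cnt_singleton]
  by_cases he : ew a i ≤ m
  · rw [if_pos he, cnt_len2 a i m he]
  · rw [if_neg he, cnt_len2_empty a i m he]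

lemma cnt_rec {k : ℕ} (a : Fin k → ℕ) (i : Fin k) (m : Fin 3 →₀ ℕ) :
    (cnt a (fun h => h.head? = some i) m : ℤ)
      = (if m = ev a i then 1 else 0)
        + (if ew a i ≤ m then
            (cnt a (fun h => h.head? ≠ some i) (m - ew a i) : ℤ) else 0) := by
  have h := cnt_rec_nat a i m
  by_cases he : ew a i ≤ m <;> by_cases hm : m = ev a i <;>
    simp only [he, hm, if_true, if_false, if_pos, if_neg, not_false_iff] at h ⊢ <;>
    exact_mod_cast h


/-! ### Power series lemmas -/

lemma X_prod_eq (α β γ : ℕ) :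
    (X 0 : MvPowerSeries (Fin 3) ℤ) ^ α * (X 1) ^ β * (X 2) ^ γ
      = monomial (Finsupp.single 0 α + Finsupp.single 1 β + Finsupp.single 2 γ) 1 := by
  rw [X_pow_eq, X_pow_eq, X_pow_eq, monomial_mul_monomial, monomial_mul_monomial,
    one_mul, one_mul]

lemma hw_eq {k : ℕ} (a : Fin k → ℕ) (i : Fin k) :
    (X 0 : MvPowerSeries (Fin 3) ℤ) ^ (2 * a i) * (X 1) ^ 2 * X 2
      = monomial (ew a i) 1 := by
  have h := X_prod_eq (2 * a i) 2 1
  rw [pow_one] at h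
  rw [h, ew]

lemma hv_eq {k : ℕ} (a : Fin k → ℕ) (i : Fin k) :
    (X 0 : MvPowerSeries (Fin 3) ℤ) ^ (a i) * X 1 = monomial (ev a i) 1 := by
  have h := X_prod_eq (a i) 1 0
  rw [pow_one, pow_zero, mul_one] at h
  rw [h, ev, Finsupp.single_zero, add_zero]

lemma coeff_T {k : ℕ} (a : Fin k → ℕ) (i : Fin k) (m : Fin 3 →₀ ℕ) :
    (coeff m) (T a i) = (cnt a (fun h => h.head? = some i) m : ℤ) := rfl

lemma coeff_SS {k : ℕ} (a : Fin k → ℕ) (m : Fin 3 →₀ ℕ) :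
    (coeff m) (SS a) = (cnt a (fun _ => True) m : ℤ) := rfl

lemma cnt_true_split {k : ℕ} (hk : 1 ≤ k) (a : Fin k → ℕ) (i : Fin k) (m : Fin 3 →₀ ℕ) :
    cnt a (fun _ => True) m
      = cnt a (fun h => h.head? = some i) m + cnt a (fun h => h.head? ≠ some i) m := by
  rw [← sum_cnt_univ hk a m, ← Finset.add_sum_erase _ _ (Finset.mem_univ i),
    sum_cnt_erase hk a m i]

lemma keyB {k : ℕ} (hk : 1 ≤ k) (a : Fin k → ℕ) (i : Fin k) :
    DD a i * T a i
      = (X 0) ^ (a i) * X 1 + (X 0) ^ (2 * a i) * (X 1) ^ 2 * X 2 * SS a := by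
  ext m
  rw [DD, add_mul, one_mul, map_add, map_add, hw_eq, hv_eq, coeff_monomial,
    coeff_monomial_mul, coeff_monomial_mul, coeff_T]
  have hrec := cnt_rec a i m
  by_cases he : ew a i ≤ m
  · rw [if_pos he, if_pos he] at *
    rw [coeff_T, coeff_SS, cnt_true_split hk a i (m - ew a i), hrec]
    push_cast
    ring
  · simp only [if_neg he] at hrec ⊢
    rw [hrec]
    ring

/-! ### The main bijection with compositions -/

def palComp {k : ℕ} (a : Fin k → ℕ) (hpos : ∀ i, 0 < a i) (n : ℕ) (h : List (Fin k))
    (hsum : (h.map a).sum + (h.map a).dropLast.sum = n) : Composition n where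
  blocks := pal (h.map a)
  blocks_pos := by
    intro p hp
    simp only [pal, List.mem_append, List.mem_reverse] at hp
    have hp' : p ∈ h.map a := by
      rcases hp with hp | hp
      · exact hp
      · exact List.dropLast_subset _ hp
    obtain ⟨i', _, rfl⟩ := List.mem_map.mp hp'
    exact hpos i'
  blocks_sum := by rw [pal_sum, hsum]

lemma FA_eq {k : ℕ} (hk : 1 ≤ k) (a : Fin k → ℕ) (hpos : ∀ i, 0 < a i)
    (hmono : StrictMono a) (m : Fin 3 →₀ ℕ) :
    FA a m = (if m = 0 then 1 else 0) + (cnt a (fun _ => True) m : ℤ) := by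
  haveI : Nonempty (Fin k) := ⟨⟨0, hk⟩⟩
  by_cases hm : m = 0
  · subst hm
    rw [if_pos rfl]
    have hcnt : cnt a (fun _ => True) 0 = 0 := by
      unfold cnt
      rw [Finset.card_eq_zero, Finset.eq_empty_iff_forall_notMem]
      intro h hh
      simp only [Finset.mem_filter, mem_listsLen] at hh
      have h1 : ((0 : Fin 3 →₀ ℕ) 1 + 1) / 2 = 0 := by simp
      rw [h1] at hh
      exact hh.2.1.1 (List.length_eq_zero_iff.mp hh.1)
    rw [hcnt]
    unfold FA
    have hb : ∀ c : Composition ((0 : Fin 3 →₀ ℕ) 0), c.blocks = [] := by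
      intro c
      cases hcb : c.blocks with
      | nil => rfl
      | cons x t =>
        have hxpos : 0 < x := c.blocks_pos (by rw [hcb]; exact List.mem_cons_self)
        have hsum := c.blocks_sum
        rw [hcb] at hsum
        simp only [List.sum_cons, Finsupp.coe_zero, Pi.zero_apply] at hsum
        omega
    have hfilter : (Finset.univ.filter (fun c : Composition ((0 : Fin 3 →₀ ℕ) 0) =>
        (∀ p ∈ c.blocks, ∃ i, a i = p) ∧ c.blocks.Chain' (· ≠ ·) ∧
        c.blocks.reverse = c.blocks ∧ c.length = (0 : Fin 3 →₀ ℕ) 1 ∧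
        risesL c.blocks = (0 : Fin 3 →₀ ℕ) 2)) = Finset.univ := by
      apply Finset.filter_true_of_mem
      intro c _
      have hb' := hb c
      refine ⟨by simp [hb'], by rw [hb']; exact List.isChain_nil, by simp [hb'], ?_, ?_⟩
      · show c.blocks.length = _
        simp [hb']
      · simp [hb', risesL_nil]
    rw [hfilter, Finset.card_univ, composition_card]
    norm_num
  · rw [if_neg hm, zero_add]
    unfold FA
    norm_cast
    unfold cnt
    refine Finset.card_bij'
      (fun (c : Composition (m 0)) _ =>
        (c.blocks.take ((m 1 + 1) / 2)).map (Function.invFun a))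
      (fun (h : List (Fin k)) hh =>
        palComp a hpos (m 0) h (by
          simp only [Finset.mem_filter, mem_listsLen] at hh
          exact hh.2.1.2.2.1))
      ?_ ?_ ?_ ?_
    -- forward membership: compositions → lists
    · intro c hc
      simp only [Finset.mem_filter, Finset.mem_univ, true_and] at hc
      obtain ⟨hparts, hch, hrev, hlen, hrise⟩ := hc
      have hbne : c.blocks ≠ [] := by
        intro hcon
        apply hm
        rw [eq3]
        have h0 := c.blocks_sum
        rw [hcon] at h0
        have h1 : c.length = 0 := by
          show c.blocks.length = 0
          rw [hcon]; rfl
        rw [h1] at hlen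
        rw [hcon] at hrise
        simp only [risesL_nil] at hrise
        simp only [List.sum_nil] at h0
        simp [← h0, ← hlen, ← hrise]
      have hodd : 2 * risesL c.blocks + 1 = c.blocks.length :=
        risesL_palindrome c.blocks.length c.blocks rfl hbne hrev hch
      have hlen' : c.blocks.length = m 1 := hlen
      set L := (m 1 + 1) / 2 with hL
      have hLval : L = m 2 + 1 := by omega
      have hLle : L ≤ c.blocks.length := by omega
      have hulen : (c.blocks.take L).length = L := by
        rw [List.length_take]; omega
      have hainv : ∀ x ∈ c.blocks.take L, a (Function.invFun a x) = x := by
        intro x hx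
        exact Function.invFun_eq (hparts x (List.take_subset L c.blocks hx))
      have hmapinv : ((c.blocks.take L).map (Function.invFun a)).map a = c.blocks.take L := by
        rw [List.map_map]
        exact (List.map_congr_left hainv).trans (List.map_id _)
      have hhalf : pal (c.blocks.take L) = c.blocks :=
        half_recover hrev (by omega) (by omega)
      simp only [Finset.mem_filter, mem_listsLen]
      refine ⟨by rw [List.length_map]; exact hulen, ⟨?_, ?_, ?_, ?_, ?_⟩, trivial⟩
      · intro hcon
        have := congrArg List.length hcon
        rw [List.length_map, hulen] at this
        simp only [List.length_nil] at this
        omega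
      · have hchu : List.Chain' (· ≠ ·) (c.blocks.take L) :=
          hch.prefix (List.take_prefix L c.blocks)
        rw [← hmapinv, List.chain'_map] at hchu
        exact hchu.imp fun x y hxy hcon => hxy (by rw [hcon])
      · rw [hmapinv]
        rw [← pal_sum, hhalf, c.blocks_sum]
      · rw [List.length_map, hulen]; omega
      · rw [List.length_map, hulen]; omega
    -- backward membership: lists → compositions
    · intro h hh
      simp only [Finset.mem_filter, mem_listsLen] at hh
      obtain ⟨hL, ⟨hne, hch, hsum, hl1, hl2⟩, -⟩ := hh
      simp only [Finset.mem_filter, Finset.mem_univ, true_and]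
      have hqne : h.map a ≠ [] := by simpa using hne
      have hchq : (h.map a).Chain' (· ≠ ·) := by
        rw [List.chain'_map]
        exact hch.imp fun x y hxy => hmono.injective.ne hxy
      show (∀ p ∈ pal (h.map a), ∃ i, a i = p) ∧ (pal (h.map a)).Chain' (· ≠ ·) ∧
        (pal (h.map a)).reverse = pal (h.map a) ∧ (pal (h.map a)).length = m 1 ∧
        risesL (pal (h.map a)) = m 2
      refine ⟨?_, pal_chain' hqne hchq, pal_reverse hqne, ?_, ?_⟩
      · intro p hp
        simp only [pal, List.mem_append, List.mem_reverse] at hp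
        have hp' : p ∈ h.map a := by
          rcases hp with hp | hp
          · exact hp
          · exact List.dropLast_subset _ hp
        obtain ⟨i', _, rfl⟩ := List.mem_map.mp hp'
        exact ⟨i', rfl⟩
      · show (pal (h.map a)).length = m 1
        rw [pal_length hqne, List.length_map]
        omega
      · have hpne : pal (h.map a) ≠ [] := by
          unfold pal
          intro hcon
          exact hqne (List.append_eq_nil_iff.mp hcon).1
        have hodd := risesL_palindrome (pal (h.map a)).length (pal (h.map a)) rfl hpne
          (pal_reverse hqne) (pal_chain' hqne hchq)
        rw [pal_length hqne, List.length_map] at hodd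
        omega
    -- left inverse: comp → list → comp
    · intro c hc
      simp only [Finset.mem_filter, Finset.mem_univ, true_and] at hc
      obtain ⟨hparts, hch, hrev, hlen, hrise⟩ := hc
      have hbne : c.blocks ≠ [] := by
        intro hcon
        apply hm
        rw [eq3]
        have h0 := c.blocks_sum
        rw [hcon] at h0
        have h1 : c.length = 0 := by
          show c.blocks.length = 0
          rw [hcon]; rfl
        rw [h1] at hlen
        rw [hcon] at hrise
        simp only [risesL_nil] at hrise
        simp only [List.sum_nil] at h0
        simp [← h0, ← hlen, ← hrise]
      have hodd : 2 * risesL c.blocks + 1 = c.blocks.length :=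
        risesL_palindrome c.blocks.length c.blocks rfl hbne hrev hch
      have hlen' : c.blocks.length = m 1 := hlen
      have hainv : ∀ x ∈ c.blocks.take ((m 1 + 1) / 2), a (Function.invFun a x) = x := by
        intro x hx
        exact Function.invFun_eq (hparts x (List.take_subset _ c.blocks hx))
      have hmapinv : ((c.blocks.take ((m 1 + 1) / 2)).map (Function.invFun a)).map a
          = c.blocks.take ((m 1 + 1) / 2) := by
        rw [List.map_map]
        exact (List.map_congr_left hainv).trans (List.map_id _)
      apply Composition.ext
      show pal _ = c.blocks
      rw [hmapinv]
      exact half_recover hrev (by omega) (by omega)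
    -- right inverse: list → comp → list
    · intro h hh
      simp only [Finset.mem_filter, mem_listsLen] at hh
      obtain ⟨hL, ⟨hne, hch, hsum, hl1, hl2⟩, -⟩ := hh
      have hqne : h.map a ≠ [] := by simpa using hne
      have hLlen : (m 1 + 1) / 2 = (h.map a).length := by
        rw [List.length_map]; omega
      show ((pal (h.map a)).take ((m 1 + 1) / 2)).map (Function.invFun a) = h
      rw [hLlen, pal_take, List.map_map]
      have : ∀ x ∈ h, Function.invFun a (a x) = x := by
        intro x _
        exact Function.leftInverse_invFun hmono.injective x
      exact (List.map_congr_left this).trans (List.map_id _)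


lemma FA_sub_one {k : ℕ} (hk : 1 ≤ k) (a : Fin k → ℕ) (hpos : ∀ i, 0 < a i)
    (hmono : StrictMono a) : FA a - 1 = SS a := by
  ext m
  rw [map_sub, coeff_one]
  have hcoeff : (coeff m) (FA a) = FA a m := rfl
  rw [hcoeff, FA_eq hk a hpos hmono m, coeff_SS]
  by_cases hm : m = 0 <;> simp [hm]

lemma sum_T {k : ℕ} (hk : 1 ≤ k) (a : Fin k → ℕ) :
    ∑ i : Fin k, T a i = SS a := by
  ext m
  rw [map_sum, coeff_SS]
  have : ∀ i : Fin k, (coeff m) (T a i) = (cnt a (fun h => h.head? = some i) m : ℤ) :=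
    fun i => rfl
  simp only [this]
  rw [← Nat.cast_sum]
  rw [sum_cnt_univ hk a m]

end Stmt16

theorem stmt16 {k : ℕ} (hk : 1 ≤ k) (a : Fin k → ℕ) (hpos : ∀ i, 0 < a i)
    (hmono : StrictMono a) :
    (FA a - 1) * ((∏ i : Fin k, DD a i)
        - X 2 * ∑ i : Fin k, (X 0) ^ (2 * a i) * (X 1) ^ 2
            * (∏ j ∈ Finset.univ.filter (· ≠ i), DD a j))
    = ∑ i : Fin k, (X 0) ^ (a i) * X 1
        * (∏ j ∈ Finset.univ.filter (· ≠ i), DD a j) := by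
  classical
  have hS : FA a - 1 = Stmt16.SS a := Stmt16.FA_sub_one hk a hpos hmono
  have hsum : ∑ i : Fin k, Stmt16.T a i = Stmt16.SS a := Stmt16.sum_T hk a
  have hB := Stmt16.keyB hk a
  have hmain : (∏ i : Fin k, DD a i) * Stmt16.SS a
      = (∑ i : Fin k, (X 0) ^ (a i) * X 1
          * (∏ j ∈ Finset.univ.filter (· ≠ i), DD a j))
        + (X 2 * ∑ i : Fin k, (X 0) ^ (2 * a i) * (X 1) ^ 2
            * (∏ j ∈ Finset.univ.filter (· ≠ i), DD a j)) * Stmt16.SS a := by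
    calc (∏ i : Fin k, DD a i) * Stmt16.SS a
        = ∑ i : Fin k, (∏ j ∈ Finset.univ.filter (· ≠ i), DD a j)
            * (DD a i * Stmt16.T a i) := by
          rw [← hsum, Finset.mul_sum]
          refine Finset.sum_congr rfl fun i _ => ?_
          rw [Finset.filter_ne', ← mul_assoc,
            Finset.prod_erase_mul _ _ (Finset.mem_univ i)]
      _ = ∑ i : Fin k, (∏ j ∈ Finset.univ.filter (· ≠ i), DD a j)
            * ((X 0) ^ (a i) * X 1
              + (X 0) ^ (2 * a i) * (X 1) ^ 2 * X 2 * Stmt16.SS a) := by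
          exact Finset.sum_congr rfl fun i _ => by rw [hB i]
      _ = _ := by
          simp only [mul_add, Finset.sum_add_distrib]
          congr 1
          · exact Finset.sum_congr rfl fun i _ => by ring
          · rw [Finset.mul_sum, Finset.sum_mul]
            exact Finset.sum_congr rfl fun i _ => by ring
  rw [hS]
  linear_combination hmain
end

section
/- Let k ≥ 1 and let a_1 < a_2 < … < a_k be positive integers, A = {a_1,…,a_k}. In ℚ[[x,y]] (where each 1 − x^{a_i}y has constant term 1 and is invertible): (i) ∑_{n≥0} ∑_{σ∈G_n^A} levels(σ)·x^n·y^{parts(σ)} = [ ∑_{j=1}^k x^{2a_j}·y^2 · ∏_{i=1}^{j−1}(1 − x^{a_i}y) − ∑_{j=1}^k x^{a_j}·y · ( ∏_{i=1}^{j−1}(1 − x^{a_i}y) ) · ( ∑_{i=1}^{j−1} x^{2a_i}·y^2·(1 − x^{a_i}y)^{-1} ) ] · ( ∏_{j=1}^k (1 − x^{a_j}y) )^{-2}; and (ii) ∑_{n≥0} ∑_{σ∈G_n^A} drops(σ)·x^n·y^{parts(σ)} = [ ( 1 − ∏_{j=1}^k (1 − x^{a_j}y) )^2 − y^2·∑_{j=1}^k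 x^{a_j} · ( ∏_{i=1}^{j−1}(1 − x^{a_i}y) ) · ( ∑_{i=1}^{j} x^{a_i} ) ] · ( ∏_{j=1}^k (1 − x^{a_j}y) )^{-2}. -/
open scoped Classical

open MvPowerSeries

/-- `∑_{n≥0} ∑_{σ∈G_n^A} levels(σ) x^n y^{parts(σ)}` in `ℚ[[x,y]]`, with
`x = X 0`, `y = X 1`; `G_n^A` is the set of partitions (compositions with no
rises) of `n` with parts in `A = {a 1, …, a k}`. -/
noncomputable def gLevels {k : ℕ} (a : Fin k → ℕ) : MvPowerSeries (Fin 2) ℚ :=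
  fun m => ((∑ c ∈ Finset.univ.filter (fun c : Composition (m 0) =>
      (∀ b ∈ c.blocks, ∃ i, a i = b) ∧ risesL c.blocks = 0 ∧ c.length = m 1),
      levelsL c.blocks : ℕ) : ℚ)

/-- `∑_{n≥0} ∑_{σ∈G_n^A} drops(σ) x^n y^{parts(σ)}` in `ℚ[[x,y]]`. -/
noncomputable def gDrops {k : ℕ} (a : Fin k → ℕ) : MvPowerSeries (Fin 2) ℚ :=
  fun m => ((∑ c ∈ Finset.univ.filter (fun c : Composition (m 0) =>
      (∀ b ∈ c.blocks, ∃ i, a i = b) ∧ risesL c.blocks = 0 ∧ c.length = m 1),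
      dropsL c.blocks : ℕ) : ℚ)

namespace Stmt19Aux
open Finset

/-! ### List lemmas -/

lemma levelsL_cons (x : ℕ) (l : List ℕ) :
    levelsL (x :: l) = levelsL l + if l.head? = some x then 1 else 0 := by
  cases l with
  | nil => simp [levelsL]
  | cons y t =>
    simp only [levelsL, List.tail_cons, List.zip_cons_cons, List.countP_cons, List.head?_cons,
      Option.some.injEq]
    by_cases h : x = y <;> simp [h, eq_comm]

lemma risesL_cons (x : ℕ) (l : List ℕ) :
    risesL (x :: l) = risesL l + if (∃ y, l.head? = some y ∧ x < y) then 1 else 0 := by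
  cases l with
  | nil => simp [risesL]
  | cons y t =>
    simp only [risesL, List.tail_cons, List.zip_cons_cons, List.countP_cons, List.head?_cons,
      Option.some.injEq]
    by_cases h : x < y <;> simp [h]

lemma dropsL_cons (x : ℕ) (l : List ℕ) :
    dropsL (x :: l) = dropsL l + if (∃ y, l.head? = some y ∧ y < x) then 1 else 0 := by
  cases l with
  | nil => simp [dropsL]
  | cons y t =>
    simp only [dropsL, List.tail_cons, List.zip_cons_cons, List.countP_cons, List.head?_cons,
      Option.some.injEq]
    by_cases h : y < x <;> simp [h]

lemma risesL_zero_of_cons {x : ℕ} {l : List ℕ} (h : risesL (x :: l) = 0) : risesL l = 0 := by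
  rw [risesL_cons] at h; omega

lemma risesL_cons_eq_zero {x : ℕ} {l : List ℕ} (hl : risesL l = 0)
    (hle : ∀ b ∈ l, b ≤ x) : risesL (x :: l) = 0 := by
  have h : ¬ ∃ y, l.head? = some y ∧ x < y := by
    rintro ⟨y, hy, hxy⟩
    exact absurd hxy (not_lt.mpr (hle y (List.mem_of_mem_head? (by simp [hy]))))
  rw [risesL_cons, hl, if_neg h]

lemma le_head_of_risesL_zero : ∀ {l : List ℕ}, risesL l = 0 → ∀ b ∈ l, ∀ y, l.head? = some y → b ≤ y := by
  intro l
  induction l with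
  | nil => intro _ b hb; simp at hb
  | cons x t ih =>
    intro h b hb y hy
    simp only [List.head?_cons, Option.some.injEq] at hy
    subst hy
    rcases List.mem_cons.mp hb with rfl | hb'
    · exact le_rfl
    · cases t with
      | nil => simp at hb'
      | cons z s =>
        have h1 : risesL (z :: s) = 0 := risesL_zero_of_cons h
        have h2 : b ≤ z := ih h1 b hb' z rfl
        have h3 : ¬ x < z := by
          rw [risesL_cons] at h
          by_contra hc
          rw [if_pos ⟨z, rfl, hc⟩] at h
          omega
        omega

/-! ### Finsupp (Fin 2) lemmas -/

lemma fin2_ext {m m' : Fin 2 →₀ ℕ} (h0 : m 0 = m' 0) (h1 : m 1 = m' 1) : m = m' := by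
  ext s
  fin_cases s
  · exact h0
  · exact h1

lemma fin2_eq_zero {m : Fin 2 →₀ ℕ} (h0 : m 0 = 0) (h1 : m 1 = 0) : m = 0 :=
  fin2_ext (by simpa using h0) (by simpa using h1)

noncomputable def dd (c : ℕ) : Fin 2 →₀ ℕ := Finsupp.single 0 c + Finsupp.single 1 1

@[simp] lemma dd_apply0 (c : ℕ) : dd c 0 = c := by
  simp [dd, Finsupp.single_apply]

@[simp] lemma dd_apply1 (c : ℕ) : dd c 1 = 1 := by
  simp [dd, Finsupp.single_apply]

lemma dd_le_iff {c : ℕ} {m : Fin 2 →₀ ℕ} : dd c ≤ m ↔ c ≤ m 0 ∧ 1 ≤ m 1 := by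
  rw [Finsupp.le_def]
  constructor
  · intro h
    exact ⟨by simpa using h 0, by simpa using h 1⟩
  · rintro ⟨h0, h1⟩ s
    fin_cases s
    · simpa using h0
    · simpa using h1

@[simp] lemma sub_dd_apply0 {c : ℕ} (m : Fin 2 →₀ ℕ) : (m - dd c) 0 = m 0 - c := by
  rw [Finsupp.tsub_apply, dd_apply0]

@[simp] lemma sub_dd_apply1 {c : ℕ} (m : Fin 2 →₀ ℕ) : (m - dd c) 1 = m 1 - 1 := by
  rw [Finsupp.tsub_apply, dd_apply1]

/-! ### the monomial t -/

noncomputable def tt (c : ℕ) : MvPowerSeries (Fin 2) ℚ := X 0 ^ c * X 1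

lemma tt_eq_monomial (c : ℕ) : tt c = monomial (dd c) 1 := by
  rw [tt, X_pow_eq, X_def, monomial_mul_monomial, one_mul]
  rfl

lemma coeff_tt_mul (c : ℕ) (F : MvPowerSeries (Fin 2) ℚ) (m : Fin 2 →₀ ℕ) :
    coeff m (tt c * F) = if dd c ≤ m then coeff (m - dd c) F else 0 := by
  rw [tt_eq_monomial, coeff_monomial_mul]
  simp

@[simp] lemma constantCoeff_tt (c : ℕ) : constantCoeff (tt c) = 0 := by
  rw [tt, map_mul, constantCoeff_X, mul_zero]

lemma one_sub_tt_mul_inv (c : ℕ) : (1 - tt c) * (1 - tt c)⁻¹ = 1 := by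
  apply MvPowerSeries.mul_inv_cancel
  simp

end Stmt19Aux

namespace Stmt19Aux
open Finset

def CSet {k : ℕ} (a : Fin k → ℕ) (m : Fin 2 →₀ ℕ) : Finset (Composition (m 0)) :=
  Finset.univ.filter (fun c : Composition (m 0) =>
      (∀ b ∈ c.blocks, ∃ i, a i = b) ∧ risesL c.blocks = 0 ∧ c.length = m 1)

lemma mem_CSet_iff {k : ℕ} {a : Fin k → ℕ} {m : Fin 2 →₀ ℕ} {c : Composition (m 0)} :
    c ∈ CSet a m ↔
      (∀ b ∈ c.blocks, ∃ i, a i = b) ∧ risesL c.blocks = 0 ∧ c.length = m 1 := by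
  simp [CSet]

noncomputable def gAll {k : ℕ} (a : Fin k → ℕ) : MvPowerSeries (Fin 2) ℚ :=
  fun m => ((CSet a m).card : ℚ)

lemma coeff_gAll {k : ℕ} (a : Fin k → ℕ) (m : Fin 2 →₀ ℕ) :
    MvPowerSeries.coeff m (gAll a) = ∑ _c ∈ CSet a m, (1 : ℚ) := by
  show ((CSet a m).card : ℚ) = _
  simp

/-- head of a member of `CSet a m` containing `a (last k)` must be `a (last k)`. -/
lemma head_eq_last {k : ℕ} {a : Fin (k + 1) → ℕ} (hmono : StrictMono a) {m : Fin 2 →₀ ℕ}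
    {c : Composition (m 0)} (hc : c ∈ CSet a m) (hmem : a (Fin.last k) ∈ c.blocks) :
    c.blocks.head? = some (a (Fin.last k)) := by
  obtain ⟨hA, hr, _⟩ := mem_CSet_iff.mp hc
  cases hbl : c.blocks with
  | nil => rw [hbl] at hmem; simp at hmem
  | cons h t =>
    rw [hbl] at hmem hA hr
    have h1 : a (Fin.last k) ≤ h := le_head_of_risesL_zero hr _ hmem h rfl
    obtain ⟨j, hj⟩ := hA h (by simp)
    have h2 : h ≤ a (Fin.last k) := hj ▸ hmono.monotone (Fin.le_last j)
    simp [le_antisymm h2 h1]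

lemma CSet_filter_ne {k : ℕ} {a : Fin (k + 1) → ℕ} (hmono : StrictMono a) (m : Fin 2 →₀ ℕ) :
    (CSet a m).filter (fun c => ¬ c.blocks.head? = some (a (Fin.last k)))
      = CSet (a ∘ Fin.castSucc) m := by
  ext c
  simp only [Finset.mem_filter, mem_CSet_iff, Function.comp_apply]
  constructor
  · rintro ⟨⟨hA, hr, hl⟩, hh⟩
    refine ⟨?_, hr, hl⟩
    intro b hb
    obtain ⟨j, rfl⟩ := hA b hb
    rcases Fin.eq_castSucc_or_eq_last j with ⟨j', rfl⟩ | rfl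
    · exact ⟨j', rfl⟩
    · exact absurd (head_eq_last hmono (mem_CSet_iff.mpr ⟨hA, hr, hl⟩) hb) hh
  · rintro ⟨hA, hr, hl⟩
    refine ⟨⟨fun b hb => (hA b hb).elim fun i hi => ⟨i.castSucc, hi⟩, hr, hl⟩, ?_⟩
    intro hh
    have hmem : a (Fin.last k) ∈ c.blocks := List.mem_of_mem_head? (by simp [hh])
    obtain ⟨i, hi⟩ := hA _ hmem
    have := hmono.injective hi
    exact absurd this (Fin.castSucc_lt_last i).ne

lemma eq_cons_of_head? {l : List ℕ} {x : ℕ} (h : l.head? = some x) : l = x :: l.tail := by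
  cases l with
  | nil => simp at h
  | cons y t => simp_all

lemma sum_CSet_head_eq {k : ℕ} (a : Fin (k + 1) → ℕ) (hpos : ∀ i, 0 < a i)
    (hmono : StrictMono a) (m : Fin 2 →₀ ℕ) (w : List ℕ → ℚ) :
    ∑ c ∈ (CSet a m).filter (fun c => c.blocks.head? = some (a (Fin.last k))), w c.blocks
      = if dd (a (Fin.last k)) ≤ m then
          ∑ c ∈ CSet a (m - dd (a (Fin.last k))), w (a (Fin.last k) :: c.blocks)
        else 0 := by
  by_cases hle : dd (a (Fin.last k)) ≤ m
  · rw [if_pos hle]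
    obtain ⟨h0, h1⟩ := dd_le_iff.mp hle
    refine Finset.sum_bij'
      (i := fun c hc => (⟨c.blocks.tail,
        fun hb => c.blocks_pos (List.tail_subset _ hb), ?_⟩ : Composition ((m - dd (a (Fin.last k))) 0)))
      (j := fun c hc => (⟨a (Fin.last k) :: c.blocks,
        fun hb => ?_, ?_⟩ : Composition (m 0)))
      ?_ ?_ ?_ ?_ ?_
    · -- sum of tail
      obtain ⟨hcm, hh⟩ := Finset.mem_filter.mp hc
      have hcons := eq_cons_of_head? hh
      have hsum : c.blocks.sum = m 0 := c.blocks_sum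
      rw [hcons, List.sum_cons] at hsum
      simp only [sub_dd_apply0]
      omega
    · -- positivity for cons
      rcases List.mem_cons.mp hb with rfl | hb'
      · exact hpos _
      · exact c.blocks_pos hb'
    · -- sum of cons
      have hsum : c.blocks.sum = (m - dd (a (Fin.last k))) 0 := c.blocks_sum
      simp only [sub_dd_apply0] at hsum
      simp only [List.sum_cons, hsum]
      omega
    · -- hi : image in CSet a (m - dd ak)
      intro c hc
      obtain ⟨hcm, hh⟩ := Finset.mem_filter.mp hc
      obtain ⟨hA, hr, hl⟩ := mem_CSet_iff.mp hcm
      have hcons := eq_cons_of_head? hh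
      rw [mem_CSet_iff]
      refine ⟨fun b hb => hA b (List.tail_subset _ hb), ?_, ?_⟩
      · have := hr
        rw [hcons] at this
        exact risesL_zero_of_cons this
      · show c.blocks.tail.length = _
        have hlen : c.blocks.length = m 1 := by
          rw [← hl, ← c.blocks_length]
        rw [hcons, List.length_cons] at hlen
        simp only [sub_dd_apply1]
        omega
    · -- hj : image in the filter
      intro c hc
      obtain ⟨hA, hr, hl⟩ := mem_CSet_iff.mp hc
      rw [Finset.mem_filter]
      constructor
      · rw [mem_CSet_iff]
        refine ⟨?_, ?_, ?_⟩
        · intro b hb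
          rcases List.mem_cons.mp hb with rfl | hb'
          · exact ⟨Fin.last k, rfl⟩
          · exact hA b hb'
        · refine risesL_cons_eq_zero hr ?_
          intro b hb
          obtain ⟨i, rfl⟩ := hA b hb
          exact hmono.monotone (Fin.le_last i)
        · show (a (Fin.last k) :: c.blocks).length = m 1
          have hlen : c.blocks.length = (m - dd (a (Fin.last k))) 1 := by
            rw [← hl, ← c.blocks_length]
          simp only [sub_dd_apply1] at hlen
          rw [List.length_cons, hlen]
          omega
      · rfl
    · -- left inverse
      intro c hc
      obtain ⟨hcm, hh⟩ := Finset.mem_filter.mp hc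
      exact Composition.ext (eq_cons_of_head? hh).symm
    · -- right inverse
      intro c hc
      exact Composition.ext rfl
    · -- weights
      intro c hc
      obtain ⟨hcm, hh⟩ := Finset.mem_filter.mp hc
      exact congrArg w (eq_cons_of_head? hh)
  · rw [if_neg hle]
    rw [Finset.filter_eq_empty_iff.mpr, Finset.sum_empty]
    intro c hc
    intro hh
    have hcons := eq_cons_of_head? hh
    obtain ⟨_, _, hl⟩ := mem_CSet_iff.mp hc
    have hsum : c.blocks.sum = m 0 := c.blocks_sum
    have hlen : c.blocks.length = m 1 := hl
    rw [hcons] at hsum hlen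
    simp only [List.sum_cons, List.length_cons] at hsum hlen
    exact hle (dd_le_iff.mpr ⟨by omega, by omega⟩)

end Stmt19Aux

namespace Stmt19Aux
open Finset

lemma sum_CSet_succ {k : ℕ} (a : Fin (k + 1) → ℕ) (hpos : ∀ i, 0 < a i)
    (hmono : StrictMono a) (m : Fin 2 →₀ ℕ) (w : List ℕ → ℚ) :
    ∑ c ∈ CSet a m, w c.blocks
      = (∑ c ∈ CSet (a ∘ Fin.castSucc) m, w c.blocks)
        + (if dd (a (Fin.last k)) ≤ m then
            ∑ c ∈ CSet a (m - dd (a (Fin.last k))), w (a (Fin.last k) :: c.blocks)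
          else 0) := by
  rw [← Finset.sum_filter_add_sum_filter_not (CSet a m)
      (fun c => c.blocks.head? = some (a (Fin.last k)))]
  rw [sum_CSet_head_eq a hpos hmono m w, CSet_filter_ne hmono m]
  ring

lemma card_filter_nil {k : ℕ} (a : Fin k → ℕ) (m : Fin 2 →₀ ℕ) :
    ((CSet a m).filter (fun c => c.blocks = [])).card = if m = 0 then 1 else 0 := by
  by_cases hm : m = 0
  · subst hm
    rw [if_pos rfl, Finset.card_eq_one]
    refine ⟨⟨[], by simp, by simp⟩, ?_⟩
    ext c
    simp only [Finset.mem_filter, mem_CSet_iff, Finset.mem_singleton]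
    constructor
    · rintro ⟨_, hnil⟩
      exact Composition.ext hnil
    · rintro rfl
      refine ⟨⟨by simp, ?_, ?_⟩, rfl⟩
      · simp [risesL]
      · simp [Composition.length]
  · rw [if_neg hm, Finset.card_eq_zero, Finset.filter_eq_empty_iff]
    intro c hc hnil
    obtain ⟨_, _, hl⟩ := mem_CSet_iff.mp hc
    have h0 : m 0 = 0 := by rw [← c.blocks_sum, hnil]; rfl
    have h1 : m 1 = 0 := by rw [← hl, ← c.blocks_length, hnil]; rfl
    exact hm (fin2_eq_zero h0 h1)

lemma card_eq_in_Q {k : ℕ} {a : Fin (k + 1) → ℕ} (hmono : StrictMono a) (m : Fin 2 →₀ ℕ) :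
    (((CSet a m).filter (fun c => c.blocks.head? = some (a (Fin.last k)))).card : ℚ)
      = ((CSet a m).card : ℚ) - ((CSet (a ∘ Fin.castSucc) m).card : ℚ) := by
  have h := Finset.card_filter_add_card_filter_not (s := CSet a m)
    (p := fun c => c.blocks.head? = some (a (Fin.last k)))
  rw [CSet_filter_ne hmono m] at h
  have := congrArg (Nat.cast : ℕ → ℚ) h
  push_cast at this
  linarith

lemma sum_levels_cons {k : ℕ} {a : Fin (k + 1) → ℕ} (hmono : StrictMono a) (m : Fin 2 →₀ ℕ) :
    ∑ c ∈ CSet a m, (levelsL (a (Fin.last k) :: c.blocks) : ℚ)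
      = (∑ c ∈ CSet a m, (levelsL c.blocks : ℚ))
        + (((CSet a m).card : ℚ) - ((CSet (a ∘ Fin.castSucc) m).card : ℚ)) := by
  have h1 : ∀ c ∈ CSet a m, (levelsL (a (Fin.last k) :: c.blocks) : ℚ)
      = (levelsL c.blocks : ℚ)
        + (if c.blocks.head? = some (a (Fin.last k)) then (1 : ℚ) else 0) := by
    intro c _
    rw [levelsL_cons]
    push_cast
    split <;> simp
  rw [Finset.sum_congr rfl h1, Finset.sum_add_distrib, Finset.sum_boole, card_eq_in_Q hmono m]

lemma sum_drops_cons {k : ℕ} {a : Fin (k + 1) → ℕ} (hmono : StrictMono a) (m : Fin 2 →₀ ℕ) :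
    ∑ c ∈ CSet a m, (dropsL (a (Fin.last k) :: c.blocks) : ℚ)
      = (∑ c ∈ CSet a m, (dropsL c.blocks : ℚ))
        + (((CSet (a ∘ Fin.castSucc) m).card : ℚ) - (if m = 0 then 1 else 0)) := by
  have h1 : ∀ c ∈ CSet a m, (dropsL (a (Fin.last k) :: c.blocks) : ℚ)
      = (dropsL c.blocks : ℚ)
        + (if (¬ c.blocks.head? = some (a (Fin.last k)) ∧ ¬ c.blocks = []) then (1 : ℚ) else 0) := by
    intro c hc
    obtain ⟨hA, hr, hl⟩ := mem_CSet_iff.mp hc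
    rw [dropsL_cons]
    have hiff : (∃ y, c.blocks.head? = some y ∧ y < a (Fin.last k))
        ↔ (¬ c.blocks.head? = some (a (Fin.last k)) ∧ ¬ c.blocks = []) := by
      constructor
      · rintro ⟨y, hy, hlt⟩
        refine ⟨fun hcon => ?_, fun hcon => by simp [hcon] at hy⟩
        rw [hcon] at hy
        exact absurd (Option.some.inj hy) (by omega)
      · rintro ⟨hne, hnil⟩
        obtain ⟨h, t, hct⟩ := List.exists_cons_of_ne_nil hnil
        obtain ⟨i, hi⟩ := hA h (by rw [hct]; simp)
        refine ⟨h, by rw [hct]; rfl, ?_⟩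
        have h1 : h ≤ a (Fin.last k) := hi ▸ hmono.monotone (Fin.le_last i)
        have h2 : h ≠ a (Fin.last k) := fun hcon => hne (by rw [hct, List.head?_cons, hcon])
        omega
    push_cast
    rw [if_congr hiff rfl rfl]
  rw [Finset.sum_congr rfl h1, Finset.sum_add_distrib, Finset.sum_boole]
  congr 1
  have h2 : (CSet a m).filter
        (fun c => ¬ c.blocks.head? = some (a (Fin.last k)) ∧ ¬ c.blocks = [])
      = (CSet (a ∘ Fin.castSucc) m).filter (fun c => ¬ c.blocks = []) := by
    rw [← CSet_filter_ne hmono m, Finset.filter_filter]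
  rw [h2]
  have h3 := Finset.card_filter_add_card_filter_not (s := CSet (a ∘ Fin.castSucc) m)
    (p := fun c => c.blocks = [])
  have h4 := card_filter_nil (a ∘ Fin.castSucc) m
  have h5 : ((CSet (a ∘ Fin.castSucc) m).filter (fun c => ¬ c.blocks = [])).card
      = (CSet (a ∘ Fin.castSucc) m).card - if m = 0 then 1 else 0 := by omega
  rw [h5]
  have h6 : (if m = 0 then 1 else 0) ≤ (CSet (a ∘ Fin.castSucc) m).card := by omega
  push_cast [Nat.cast_sub h6]
  split <;> simp

end Stmt19Aux

namespace Stmt19Aux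
open Finset

lemma coeff_gAll_card {k : ℕ} (a : Fin k → ℕ) (m : Fin 2 →₀ ℕ) :
    MvPowerSeries.coeff m (gAll a) = ((CSet a m).card : ℚ) := rfl

lemma coeff_gLevels {k : ℕ} (a : Fin k → ℕ) (m : Fin 2 →₀ ℕ) :
    MvPowerSeries.coeff m (gLevels a) = ∑ c ∈ CSet a m, (levelsL c.blocks : ℚ) := by
  show ((∑ c ∈ CSet a m, levelsL c.blocks : ℕ) : ℚ) = _
  push_cast
  rfl

lemma coeff_gDrops {k : ℕ} (a : Fin k → ℕ) (m : Fin 2 →₀ ℕ) :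
    MvPowerSeries.coeff m (gDrops a) = ∑ c ∈ CSet a m, (dropsL c.blocks : ℚ) := by
  show ((∑ c ∈ CSet a m, dropsL c.blocks : ℕ) : ℚ) = _
  push_cast
  rfl

lemma gAll_succ {k : ℕ} (a : Fin (k + 1) → ℕ) (hpos : ∀ i, 0 < a i) (hmono : StrictMono a) :
    gAll a = gAll (a ∘ Fin.castSucc) + tt (a (Fin.last k)) * gAll a := by
  apply MvPowerSeries.ext; intro m
  rw [map_add, coeff_tt_mul, coeff_gAll, coeff_gAll,
    sum_CSet_succ a hpos hmono m (fun _ => (1 : ℚ))]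
  congr 1
  split
  · rw [coeff_gAll]
  · rfl

lemma gLevels_succ {k : ℕ} (a : Fin (k + 1) → ℕ) (hpos : ∀ i, 0 < a i) (hmono : StrictMono a) :
    gLevels a = gLevels (a ∘ Fin.castSucc)
      + tt (a (Fin.last k)) * (gLevels a + gAll a - gAll (a ∘ Fin.castSucc)) := by
  apply MvPowerSeries.ext; intro m
  rw [map_add, coeff_tt_mul, coeff_gLevels, coeff_gLevels,
    sum_CSet_succ a hpos hmono m (fun l => (levelsL l : ℚ))]
  congr 1
  split
  · rw [sum_levels_cons hmono, map_sub, map_add, coeff_gLevels, coeff_gAll_card, coeff_gAll_card]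
    ring
  · rfl

lemma gDrops_succ {k : ℕ} (a : Fin (k + 1) → ℕ) (hpos : ∀ i, 0 < a i) (hmono : StrictMono a) :
    gDrops a = gDrops (a ∘ Fin.castSucc)
      + tt (a (Fin.last k)) * (gDrops a + gAll (a ∘ Fin.castSucc) - 1) := by
  apply MvPowerSeries.ext; intro m
  rw [map_add, coeff_tt_mul, coeff_gDrops, coeff_gDrops,
    sum_CSet_succ a hpos hmono m (fun l => (dropsL l : ℚ))]
  congr 1
  split
  · rw [sum_drops_cons hmono, map_sub, map_add, coeff_gDrops, coeff_gAll_card, coeff_one]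
    ring
  · rfl

lemma blocks_eq_nil_of_sum_zero {n : ℕ} (hn : n = 0) (c : Composition n) : c.blocks = [] := by
  cases hb : c.blocks with
  | nil => rfl
  | cons x t =>
    have hpos := c.blocks_pos (hb ▸ List.mem_cons_self (a := x) (l := t))
    have hsum := c.blocks_sum
    rw [hb, List.sum_cons] at hsum
    omega

lemma sum_CSet_zero (a : Fin 0 → ℕ) (m : Fin 2 →₀ ℕ) (w : List ℕ → ℚ) :
    ∑ c ∈ CSet a m, w c.blocks = if m = 0 then w [] else 0 := by
  by_cases hm : m = 0
  · subst hm
    rw [if_pos rfl]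
    have huniq : CSet a (0 : Fin 2 →₀ ℕ) = {⟨[], by simp, by simp⟩} := by
      ext c
      simp only [mem_CSet_iff, Finset.mem_singleton]
      constructor
      · intro _
        exact Composition.ext (blocks_eq_nil_of_sum_zero (by simp) c)
      · rintro rfl
        exact ⟨by simp, by simp [risesL], by simp [Composition.length]⟩
    rw [huniq, Finset.sum_singleton]
  · rw [if_neg hm]
    have hempty : CSet a m = ∅ := by
      rw [Finset.eq_empty_iff_forall_notMem]
      intro c hc
      obtain ⟨hA, hr, hl⟩ := mem_CSet_iff.mp hc
      have hnil : c.blocks = [] := by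
        cases hb : c.blocks with
        | nil => rfl
        | cons x t =>
          obtain ⟨i, _⟩ := hA x (by rw [hb]; simp)
          exact i.elim0
      have h0 : m 0 = 0 := by rw [← c.blocks_sum, hnil]; rfl
      have h1 : m 1 = 0 := by rw [← hl, ← c.blocks_length, hnil]; rfl
      exact hm (fin2_eq_zero h0 h1)
    rw [hempty, Finset.sum_empty]

lemma gAll_zero (a : Fin 0 → ℕ) : gAll a = 1 := by
  apply MvPowerSeries.ext; intro m
  rw [coeff_gAll, sum_CSet_zero a m (fun _ => (1 : ℚ)), MvPowerSeries.coeff_one]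

lemma gLevels_zero (a : Fin 0 → ℕ) : gLevels a = 0 := by
  apply MvPowerSeries.ext; intro m
  rw [coeff_gLevels, sum_CSet_zero a m (fun l => (levelsL l : ℚ))]
  simp [levelsL]

lemma gDrops_zero (a : Fin 0 → ℕ) : gDrops a = 0 := by
  apply MvPowerSeries.ext; intro m
  rw [coeff_gDrops, sum_CSet_zero a m (fun l => (dropsL l : ℚ))]
  simp [dropsL]

end Stmt19Aux

namespace Stmt19Aux
open Finset

lemma main : ∀ (k : ℕ) (a : Fin k → ℕ), (∀ i, 0 < a i) → StrictMono a →
    gAll a * (∏ i, (1 - tt (a i))) = 1 ∧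
    gLevels a * (∏ i, (1 - tt (a i))) ^ 2
      = (∑ i, tt (a i) ^ 2 * (1 - tt (a i))⁻¹) * ∏ i, (1 - tt (a i)) ∧
    gDrops a * (∏ i, (1 - tt (a i))) ^ 2
      = ((∑ i, tt (a i)) - 1 + ∏ i, (1 - tt (a i))) * ∏ i, (1 - tt (a i)) := by
  intro k
  induction k with
  | zero =>
    intro a _ _
    rw [gAll_zero, gLevels_zero, gDrops_zero]
    refine ⟨?_, ?_, ?_⟩ <;> simp
  | succ k ih =>
    intro a hpos hmono
    have hpos' : ∀ i, 0 < (a ∘ Fin.castSucc) i := fun i => hpos _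
    have hmono' : StrictMono (a ∘ Fin.castSucc) :=
      fun i j h => hmono (Fin.castSucc_lt_castSucc_iff.mpr h)
    obtain ⟨ih1, ih2, ih3⟩ := ih (a ∘ Fin.castSucc) hpos' hmono'
    simp only [Function.comp_apply] at ih1 ih2 ih3
    have r1 : gAll a * (1 - tt (a (Fin.last k))) = gAll (a ∘ Fin.castSucc) := by
      linear_combination gAll_succ a hpos hmono
    have r2 : gLevels a * (1 - tt (a (Fin.last k)))
        = gLevels (a ∘ Fin.castSucc)
          + tt (a (Fin.last k)) * (gAll a - gAll (a ∘ Fin.castSucc)) := by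
      linear_combination gLevels_succ a hpos hmono
    have r3 : gDrops a * (1 - tt (a (Fin.last k)))
        = gDrops (a ∘ Fin.castSucc)
          + tt (a (Fin.last k)) * (gAll (a ∘ Fin.castSucc) - 1) := by
      linear_combination gDrops_succ a hpos hmono
    have huv := one_sub_tt_mul_inv (a (Fin.last k))
    refine ⟨?_, ?_, ?_⟩
    · rw [Fin.prod_univ_castSucc]
      linear_combination (∏ i : Fin k, (1 - tt (a (Fin.castSucc i)))) * r1 + ih1
    · rw [Fin.prod_univ_castSucc, Fin.sum_univ_castSucc]
      linear_combination
        ((1 - tt (a (Fin.last k))) * (∏ i : Fin k, (1 - tt (a (Fin.castSucc i)))) ^ 2) * r2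
        + (1 - tt (a (Fin.last k))) * ih2
        + (tt (a (Fin.last k)) * (∏ i : Fin k, (1 - tt (a (Fin.castSucc i)))) ^ 2) * r1
        + (tt (a (Fin.last k)) ^ 2 * (∏ i : Fin k, (1 - tt (a (Fin.castSucc i))))) * ih1
        - (tt (a (Fin.last k)) ^ 2 * (∏ i : Fin k, (1 - tt (a (Fin.castSucc i))))) * huv
    · rw [Fin.prod_univ_castSucc, Fin.sum_univ_castSucc]
      linear_combination
        ((1 - tt (a (Fin.last k))) * (∏ i : Fin k, (1 - tt (a (Fin.castSucc i)))) ^ 2) * r3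
        + (1 - tt (a (Fin.last k))) * ih3
        + (tt (a (Fin.last k)) * (1 - tt (a (Fin.last k)))
            * (∏ i : Fin k, (1 - tt (a (Fin.castSucc i))))) * ih1

end Stmt19Aux

namespace Stmt19Aux
open Finset

lemma ringid_levels {R : Type*} [CommRing R] (t v : ℕ → R) :
    ∀ k : ℕ, (∀ i < k, (1 - t i) * v i = 1) →
    (∑ j ∈ Finset.range k, t j ^ 2 * ∏ i ∈ Finset.range j, (1 - t i))
      - (∑ j ∈ Finset.range k, t j * (∏ i ∈ Finset.range j, (1 - t i))
          * (∑ i ∈ Finset.range j, t i ^ 2 * v i))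
    = (∑ i ∈ Finset.range k, t i ^ 2 * v i) * ∏ i ∈ Finset.range k, (1 - t i) := by
  intro k
  induction k with
  | zero => intro _; simp
  | succ k ih =>
    intro hv
    have ih' := ih (fun i hi => hv i (Nat.lt_succ_of_lt hi))
    simp only [Finset.sum_range_succ, Finset.prod_range_succ]
    linear_combination ih'
      - t k ^ 2 * (∏ i ∈ Finset.range k, (1 - t i)) * hv k (Nat.lt_succ_self k)

lemma ringid_drops {R : Type*} [CommRing R] (t : ℕ → R) :
    ∀ k : ℕ,
    (1 - ∏ i ∈ Finset.range k, (1 - t i)) ^ 2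
      - ∑ j ∈ Finset.range k, t j * (∏ i ∈ Finset.range j, (1 - t i))
          * (∑ i ∈ Finset.range (j + 1), t i)
    = ((∑ i ∈ Finset.range k, t i) - 1 + ∏ i ∈ Finset.range k, (1 - t i))
        * ∏ i ∈ Finset.range k, (1 - t i) := by
  intro k
  induction k with
  | zero => simp
  | succ k ih =>
    simp only [Finset.sum_range_succ, Finset.prod_range_succ] at ih ⊢
    linear_combination ih

lemma sum_univ_to_range {M : Type*} [AddCommMonoid M] {k : ℕ} (f : Fin k → M) (F : ℕ → M)
    (h : ∀ i : Fin k, f i = F i.val) : ∑ i, f i = ∑ i ∈ Finset.range k, F i := by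
  rw [← Fin.sum_univ_eq_sum_range F k]
  exact Finset.sum_congr rfl (fun i _ => h i)

lemma prod_univ_to_range {M : Type*} [CommMonoid M] {k : ℕ} (f : Fin k → M) (F : ℕ → M)
    (h : ∀ i : Fin k, f i = F i.val) : ∏ i, f i = ∏ i ∈ Finset.range k, F i := by
  rw [← Fin.prod_univ_eq_prod_range F k]
  exact Finset.prod_congr rfl (fun i _ => h i)

lemma sum_filter_lt_to_range {M : Type*} [AddCommMonoid M] {k : ℕ} (j : Fin k)
    (f : Fin k → M) (F : ℕ → M) (h : ∀ i : Fin k, f i = F i.val) :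
    ∑ i ∈ Finset.univ.filter (· < j), f i = ∑ i ∈ Finset.range j.val, F i := by
  refine Finset.sum_bij' (fun x _ => (x.val : ℕ))
    (fun n hn => (⟨n, lt_trans (Finset.mem_range.mp hn) j.isLt⟩ : Fin k)) ?_ ?_ ?_ ?_ ?_
  · intro x hx
    rw [Finset.mem_range]
    exact (Finset.mem_filter.mp hx).2
  · intro n hn
    rw [Finset.mem_filter]
    exact ⟨Finset.mem_univ _, Finset.mem_range.mp hn⟩
  · intro x hx
    exact Fin.ext rfl
  · intro n hn
    rfl
  · intro x hx
    exact h x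

lemma prod_filter_lt_to_range {M : Type*} [CommMonoid M] {k : ℕ} (j : Fin k)
    (f : Fin k → M) (F : ℕ → M) (h : ∀ i : Fin k, f i = F i.val) :
    ∏ i ∈ Finset.univ.filter (· < j), f i = ∏ i ∈ Finset.range j.val, F i := by
  refine Finset.prod_bij' (fun x _ => (x.val : ℕ))
    (fun n hn => (⟨n, lt_trans (Finset.mem_range.mp hn) j.isLt⟩ : Fin k)) ?_ ?_ ?_ ?_ ?_
  · intro x hx
    rw [Finset.mem_range]
    exact (Finset.mem_filter.mp hx).2
  · intro n hn
    rw [Finset.mem_filter]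
    exact ⟨Finset.mem_univ _, Finset.mem_range.mp hn⟩
  · intro x hx
    exact Fin.ext rfl
  · intro n hn
    rfl
  · intro x hx
    exact h x

lemma sum_filter_le_to_range {M : Type*} [AddCommMonoid M] {k : ℕ} (j : Fin k)
    (f : Fin k → M) (F : ℕ → M) (h : ∀ i : Fin k, f i = F i.val) :
    ∑ i ∈ Finset.univ.filter (· ≤ j), f i = ∑ i ∈ Finset.range (j.val + 1), F i := by
  refine Finset.sum_bij' (fun x _ => (x.val : ℕ))
    (fun n hn => (⟨n, lt_of_le_of_lt (Nat.lt_succ_iff.mp (Finset.mem_range.mp hn)) j.isLt⟩ : Fin k))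
    ?_ ?_ ?_ ?_ ?_
  · intro x hx
    rw [Finset.mem_range, Nat.lt_succ_iff]
    exact (Finset.mem_filter.mp hx).2
  · intro n hn
    rw [Finset.mem_filter]
    exact ⟨Finset.mem_univ _, Nat.lt_succ_iff.mp (Finset.mem_range.mp hn)⟩
  · intro x hx
    exact Fin.ext rfl
  · intro n hn
    rfl
  · intro x hx
    exact h x

noncomputable def text {k : ℕ} (a : Fin k → ℕ) : ℕ → MvPowerSeries (Fin 2) ℚ :=
  fun n => if h : n < k then tt (a ⟨n, h⟩) else 0

lemma text_val {k : ℕ} (a : Fin k → ℕ) (i : Fin k) : text a i.val = tt (a i) := by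
  simp [text]

lemma text_mul_inv {k : ℕ} (a : Fin k → ℕ) : ∀ i < k, (1 - text a i) * (1 - text a i)⁻¹ = 1 := by
  intro i hi
  have : text a i = tt (a ⟨i, hi⟩) := by simp [text, hi]
  rw [this]
  exact one_sub_tt_mul_inv _

end Stmt19Aux

namespace Stmt19Aux

lemma tt_def (c : ℕ) : tt c = (X 0 : MvPowerSeries (Fin 2) ℚ) ^ c * X 1 := rfl

lemma tt_sq (c : ℕ) : (X 0 : MvPowerSeries (Fin 2) ℚ) ^ (2 * c) * (X 1) ^ 2 = tt c ^ 2 := by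
  rw [tt_def, mul_pow, ← pow_mul, mul_comm c 2]

end Stmt19Aux


open Stmt19Aux Finset

set_option linter.unusedVariables false

theorem stmt19 {k : ℕ} (hk : 1 ≤ k) (a : Fin k → ℕ) (hpos : ∀ i, 0 < a i)
    (hmono : StrictMono a) :
    (gLevels a
      = ((∑ j : Fin k, (X 0) ^ (2 * a j) * (X 1) ^ 2
              * ∏ i ∈ Finset.univ.filter (· < j),
                  (1 - (X 0 : MvPowerSeries (Fin 2) ℚ) ^ (a i) * X 1))
          - ∑ j : Fin k, (X 0) ^ (a j) * X 1
              * (∏ i ∈ Finset.univ.filter (· < j),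
                  (1 - (X 0 : MvPowerSeries (Fin 2) ℚ) ^ (a i) * X 1))
              * (∑ i ∈ Finset.univ.filter (· < j),
                  (X 0) ^ (2 * a i) * (X 1) ^ 2
                    * (1 - (X 0 : MvPowerSeries (Fin 2) ℚ) ^ (a i) * X 1)⁻¹))
        * ((∏ j : Fin k, (1 - (X 0 : MvPowerSeries (Fin 2) ℚ) ^ (a j) * X 1)) ^ 2)⁻¹)
    ∧ (gDrops a
      = ((1 - ∏ j : Fin k, (1 - (X 0 : MvPowerSeries (Fin 2) ℚ) ^ (a j) * X 1)) ^ 2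
          - (X 1) ^ 2 * ∑ j : Fin k, (X 0) ^ (a j)
              * (∏ i ∈ Finset.univ.filter (· < j),
                  (1 - (X 0 : MvPowerSeries (Fin 2) ℚ) ^ (a i) * X 1))
              * (∑ i ∈ Finset.univ.filter (· ≤ j),
                  (X 0 : MvPowerSeries (Fin 2) ℚ) ^ (a i)))
        * ((∏ j : Fin k, (1 - (X 0 : MvPowerSeries (Fin 2) ℚ) ^ (a j) * X 1)) ^ 2)⁻¹) := by
  obtain ⟨h1, h2, h3⟩ := Stmt19Aux.main k a hpos hmono
  have hfold : ∀ c : ℕ, (X 0 : MvPowerSeries (Fin 2) ℚ) ^ c * X 1 = tt c := fun _ => rfl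
  have hP : constantCoeff ((∏ i, (1 - tt (a i))) ^ 2) ≠ 0 := by
    rw [map_pow, map_prod]
    simp
  have hPinv : (∏ i, (1 - tt (a i))) ^ 2 * (((∏ i, (1 - tt (a i))) ^ 2)⁻¹) = 1 :=
    MvPowerSeries.mul_inv_cancel _ hP
  constructor
  · -- levels part
    simp only [tt_sq, hfold]
    have key : gLevels a
        = ((∑ i, tt (a i) ^ 2 * (1 - tt (a i))⁻¹) * ∏ i, (1 - tt (a i)))
            * (((∏ i, (1 - tt (a i))) ^ 2)⁻¹) := by
      calc gLevels a
          = gLevels a * ((∏ i, (1 - tt (a i))) ^ 2 * (((∏ i, (1 - tt (a i))) ^ 2)⁻¹)) := by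
            rw [hPinv, mul_one]
        _ = (gLevels a * (∏ i, (1 - tt (a i))) ^ 2) * (((∏ i, (1 - tt (a i))) ^ 2)⁻¹) := by
            ring
        _ = _ := by rw [h2]
    rw [key]
    congr 1
    have e1 : (∑ j : Fin k, tt (a j) ^ 2
          * ∏ i ∈ Finset.univ.filter (· < j), (1 - tt (a i)))
        = ∑ j ∈ Finset.range k, text a j ^ 2 * ∏ i ∈ Finset.range j, (1 - text a i) := by
      apply sum_univ_to_range
      intro j
      rw [text_val]
      congr 1
      exact prod_filter_lt_to_range j _ _ (fun i => by rw [text_val])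
    have e2 : (∑ j : Fin k, tt (a j)
          * (∏ i ∈ Finset.univ.filter (· < j), (1 - tt (a i)))
          * (∑ i ∈ Finset.univ.filter (· < j), tt (a i) ^ 2 * (1 - tt (a i))⁻¹))
        = ∑ j ∈ Finset.range k, text a j * (∏ i ∈ Finset.range j, (1 - text a i))
            * (∑ i ∈ Finset.range j, text a i ^ 2 * (1 - text a i)⁻¹) := by
      apply sum_univ_to_range
      intro j
      rw [text_val]
      congr 1
      · congr 1
        exact prod_filter_lt_to_range j _ _ (fun i => by rw [text_val])
      · exact sum_filter_lt_to_range j _ _ (fun i => by rw [text_val])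
    have eS : (∑ i, tt (a i) ^ 2 * (1 - tt (a i))⁻¹)
        = ∑ i ∈ Finset.range k, text a i ^ 2 * (1 - text a i)⁻¹ :=
      sum_univ_to_range _ _ (fun i => by rw [text_val])
    have eP : (∏ i, (1 - tt (a i))) = ∏ i ∈ Finset.range k, (1 - text a i) :=
      prod_univ_to_range _ _ (fun i => by rw [text_val])
    rw [e1, e2, eS, eP]
    exact (ringid_levels (text a) (fun n => (1 - text a n)⁻¹) k (text_mul_inv a)).symm
  · -- drops part
    simp only [hfold]
    have key : gDrops a
        = (((∑ i, tt (a i)) - 1 + ∏ i, (1 - tt (a i))) * ∏ i, (1 - tt (a i)))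
            * (((∏ i, (1 - tt (a i))) ^ 2)⁻¹) := by
      calc gDrops a
          = gDrops a * ((∏ i, (1 - tt (a i))) ^ 2 * (((∏ i, (1 - tt (a i))) ^ 2)⁻¹)) := by
            rw [hPinv, mul_one]
        _ = (gDrops a * (∏ i, (1 - tt (a i))) ^ 2) * (((∏ i, (1 - tt (a i))) ^ 2)⁻¹) := by
            ring
        _ = _ := by rw [h3]
    rw [key]
    congr 1
    have hd : (X 1 : MvPowerSeries (Fin 2) ℚ) ^ 2 * ∑ j : Fin k, (X 0) ^ (a j)
          * (∏ i ∈ Finset.univ.filter (· < j), (1 - tt (a i)))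
          * (∑ i ∈ Finset.univ.filter (· ≤ j), (X 0 : MvPowerSeries (Fin 2) ℚ) ^ (a i))
        = ∑ j : Fin k, tt (a j)
            * (∏ i ∈ Finset.univ.filter (· < j), (1 - tt (a i)))
            * (∑ i ∈ Finset.univ.filter (· ≤ j), tt (a i)) := by
      rw [Finset.mul_sum]
      apply Finset.sum_congr rfl
      intro j _
      have hT : (∑ i ∈ Finset.univ.filter (· ≤ j), tt (a i))
          = (∑ i ∈ Finset.univ.filter (· ≤ j), (X 0 : MvPowerSeries (Fin 2) ℚ) ^ (a i)) * X 1 := by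
        rw [Finset.sum_mul]
        rfl
      rw [hT, tt_def]
      ring
    rw [hd]
    have eS : (∑ i, tt (a i)) = ∑ i ∈ Finset.range k, text a i :=
      sum_univ_to_range _ _ (fun i => by rw [text_val])
    have eP : (∏ i, (1 - tt (a i))) = ∏ i ∈ Finset.range k, (1 - text a i) :=
      prod_univ_to_range _ _ (fun i => by rw [text_val])
    have ed : (∑ j : Fin k, tt (a j)
          * (∏ i ∈ Finset.univ.filter (· < j), (1 - tt (a i)))
          * (∑ i ∈ Finset.univ.filter (· ≤ j), tt (a i)))
        = ∑ j ∈ Finset.range k, text a j * (∏ i ∈ Finset.range j, (1 - text a i))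
            * (∑ i ∈ Finset.range (j + 1), text a i) := by
      apply sum_univ_to_range
      intro j
      rw [text_val]
      congr 1
      · congr 1
        exact prod_filter_lt_to_range j _ _ (fun i => by rw [text_val])
      · exact sum_filter_le_to_range j _ _ (fun i => by rw [text_val])
    rw [eS, eP, ed]
    exact (ringid_drops (text a) k).symm
end
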